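/- arXiv:2501.14415 — 7 statements merged into one kernel-verified Lean document; each statement's English description precedes it below -/
import Mathlib

section
/- Let k be a field of characteristic zero, R = k[x,y], and d = y^m ∂_x + (1 - x^α y) ∂_y with integers m ≥ 2 and α ≥ 1. If r ∈ R satisfies d(r) = a x + b for some a, b ∈ k, then r ∈ k and a = b = 0. -/
/-!
Give `x` weight `m` and `y` weight `α + 1`. Then `d = δ + ∂_y`, where `δ = y^m ∂ₓ - x^α y ∂_y`
raises the weight by `m α` and `∂_y` lowers it, so the top-weight part of `d r` is `δ` of the
top-weight part of `r`. On a line of fixed weight, `δ g = 0` links each coefficient of `g` to its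
neighbours `(i, j) ↦ (i ± (α + 1), j ∓ m)` with nonzero factors, so `g` is a multiple of a power of
`F = m x^(α+1) + (α+1) y^m`. Since `d F = m (α+1) y^(m-1)`, peeling these powers off by induction
on the weight shows that every `r` with `d r ∈ k x + k + k[F] y^(m-1)` lies in `k[F]`. The only
obstruction, a top-weight equation `δ g = γ F^e y^(m-1)`, forces `γ = 0`: along the chain of
coefficients it meets, a combination of the equations with positive weights telescopes to
`γ · (positive) = 0`. Finally `d (P(F)) = m (α+1) P'(F) y^(m-1)` lies in `k x + k` only if it
vanishes, and `F` is transcendental, so `P` is constant.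
-/

open Polynomial

namespace PolyDerivXY

theorem dvd_and_of_step {N : ℕ → ℕ → Prop} {n a : ℕ} (hn : 0 < n)
    (step : ∀ p q, N p q → q ≠ 0 → n ≤ q ∧ N (p + a) (q - n)) {p q : ℕ} (h : N p q) :
    n ∣ q ∧ N (p + a * (q / n)) 0 := by
  induction q using Nat.strong_induction_on generalizing p with
  | _ q ih =>
    rcases Nat.eq_zero_or_pos q with rfl | hq
    · simpa using h
    obtain ⟨hnq, h'⟩ := step p q h hq.ne'
    obtain ⟨hdvd, hbot⟩ := ih (q - n) (by omega) h'
    obtain ⟨q, rfl⟩ : ∃ q', q = q' + n := ⟨q - n, by omega⟩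
    rw [Nat.add_sub_cancel] at hdvd hbot
    refine ⟨dvd_add hdvd dvd_rfl, ?_⟩
    rwa [Nat.add_div_right q hn, mul_add_one, ← add_assoc, add_right_comm]

theorem eq_zero_of_telescoping {K : Type*} [Field K] [CharZero K] {e : ℕ} {A B c : ℕ → ℕ}
    (hA : ∀ t, 0 < A t) (hB : ∀ t, 0 < B t) (hc : ∀ t ≤ e, 0 < c t) {y : ℕ → K} {γ : K}
    (h0 : y 0 = 0) (he : y (e + 1) = 0)
    (h : ∀ t ≤ e, (A t : K) * y t - B t * y (t + 1) = γ * c t) : γ = 0 := by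
  set w : ℕ → ℚ := fun t => ∏ u ∈ Finset.range t, (B u : ℚ) / A (u + 1)
  have hw (t : ℕ) : (w t : K) * B t = w (t + 1) * A (t + 1) := by
    have : w t * B t = w (t + 1) * A (t + 1) := by
      simp only [w, Finset.prod_range_succ]
      field_simp [(hA (t + 1)).ne']
    exact_mod_cast congrArg (fun x : ℚ => (x : K)) this
  have hsum : γ * ((∑ t ∈ Finset.range (e + 1), w t * c t : ℚ) : K) = 0 := by
    calc γ * ((∑ t ∈ Finset.range (e + 1), w t * c t : ℚ) : K)
        = ∑ t ∈ Finset.range (e + 1),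
            ((w t : K) * A t * y t - (w (t + 1) : K) * A (t + 1) * y (t + 1)) := by
          push_cast
          rw [Finset.mul_sum]
          refine Finset.sum_congr rfl fun t ht => ?_
          linear_combination -(w t : K) * h t (Nat.lt_succ_iff.mp (Finset.mem_range.mp ht)) -
            y (t + 1) * hw t
      _ = 0 := by
          rw [Finset.sum_range_sub' (fun t => (w t : K) * A t * y t), h0, he]
          simp
  have hpos : 0 < ∑ t ∈ Finset.range (e + 1), w t * c t := by
    refine Finset.sum_pos (fun t ht => mul_pos ?_ ?_) ⟨0, by simp⟩
    · exact Finset.prod_pos fun u _ => div_pos (by exact_mod_cast hB u) (by exact_mod_cast hA _)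
    · exact_mod_cast hc t (Nat.lt_succ_iff.mp (Finset.mem_range.mp ht))
  exact (mul_eq_zero.mp hsum).resolve_right (by exact_mod_cast hpos.ne')

section Weight

variable {R : Type*}

section Semiring

variable [Semiring R]

noncomputable def coeff₂ (r : R[X][X]) (i j : ℕ) : R := (r.coeff j).coeff i

@[simp] lemma coeff₂_add (r s : R[X][X]) (i j : ℕ) :
    coeff₂ (r + s) i j = coeff₂ r i j + coeff₂ s i j := by
  simp [coeff₂]

@[simp] lemma coeff₂_smul (c : R) (r : R[X][X]) (i j : ℕ) :
    coeff₂ (c • r) i j = c * coeff₂ r i j := by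
  simp [coeff₂]

lemma coeff₂_sum {ι : Type*} (s : Finset ι) (f : ι → R[X][X]) (i j : ℕ) :
    coeff₂ (∑ x ∈ s, f x) i j = ∑ x ∈ s, coeff₂ (f x) i j := by
  simp only [coeff₂, finsetSum_coeff]

lemma coeff₂_mul_X_pow (r : R[X][X]) (n i j : ℕ) :
    coeff₂ (r * X ^ n) i (j + n) = coeff₂ r i j := by
  simp [coeff₂]

def WeightLE (u v W : ℕ) (r : R[X][X]) : Prop :=
  ∀ i j, W < u * i + v * j → coeff₂ r i j = 0

namespace WeightLE

variable {u v W W' : ℕ} {r s : R[X][X]}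

lemma mono (h : WeightLE u v W r) (hW : W ≤ W') : WeightLE u v W' r :=
  fun i j hij => h i j (hW.trans_lt hij)

lemma add (hr : WeightLE u v W r) (hs : WeightLE u v W s) : WeightLE u v W (r + s) :=
  fun i j hij => by rw [coeff₂_add, hr i j hij, hs i j hij, add_zero]

lemma smul (hr : WeightLE u v W r) (c : R) : WeightLE u v W (c • r) :=
  fun i j hij => by rw [coeff₂_smul, hr i j hij, mul_zero]

lemma sum {ι : Type*} {t : Finset ι} {f : ι → R[X][X]} (h : ∀ x ∈ t, WeightLE u v W (f x)) :
    WeightLE u v W (∑ x ∈ t, f x) :=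
  fun i j hij => by
    rw [coeff₂_sum]
    exact Finset.sum_eq_zero fun x hx => h x hx i j hij

lemma mul {A B : ℕ} (hr : WeightLE u v A r) (hs : WeightLE u v B s) :
    WeightLE u v (A + B) (r * s) := by
  intro i j hij
  simp only [coeff₂, coeff_mul, finsetSum_coeff]
  refine Finset.sum_eq_zero fun p hp => Finset.sum_eq_zero fun q hq => ?_
  rw [Finset.HasAntidiagonal.mem_antidiagonal] at hp hq
  have hsplit : u * i + v * j = (u * q.1 + v * p.1) + (u * q.2 + v * p.2) := by
    rw [← hp, ← hq]; ring
  by_cases hA : u * q.1 + v * p.1 ≤ A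
  · rw [show (s.coeff p.2).coeff q.2 = 0 from hs q.2 p.2 (by omega), mul_zero]
  · rw [show (r.coeff p.1).coeff q.1 = 0 from hr q.1 p.1 (by omega), zero_mul]

lemma pred (hr : WeightLE u v W r) (hline : ∀ i j, u * i + v * j = W → coeff₂ r i j = 0) :
    WeightLE u v (W - 1) r := fun i j hij =>
  (eq_or_lt_of_le (Nat.le_of_pred_lt hij)).elim (fun h => hline i j h.symm) (hr i j)

end WeightLE

lemma weightLE_C {u v n : ℕ} {p : R[X]} (hp : p.natDegree ≤ n) :
    WeightLE u v (u * n) (C p : R[X][X]) := by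
  intro i j hij
  simp only [coeff₂, coeff_C]
  split_ifs with hj
  · subst hj
    exact coeff_eq_zero_of_natDegree_lt
      (hp.trans_lt (Nat.lt_of_mul_lt_mul_left (by simpa using hij)))
  · rfl

lemma weightLE_one {u v : ℕ} : WeightLE u v 0 (1 : R[X][X]) := by
  simpa using weightLE_C (R := R) (u := u) (v := v) (p := 1) natDegree_one.le

lemma weightLE_X {u v : ℕ} : WeightLE u v v (X : R[X][X]) := by
  intro i j hij
  simp only [coeff₂, coeff_X]
  split_ifs with hj
  · subst hj
    rw [coeff_one, if_neg]
    rintro rfl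
    simp at hij
  · rfl

lemma WeightLE.pow {u v A : ℕ} {r : R[X][X]} (hr : WeightLE u v A r) (n : ℕ) :
    WeightLE u v (n * A) (r ^ n) := by
  induction n with
  | zero => simpa using weightLE_one
  | succ n ih => simpa [pow_succ, Nat.succ_mul] using ih.mul hr

lemma exists_weightLE (u v : ℕ) (r : R[X][X]) : ∃ W, WeightLE u v W r := by
  refine ⟨u * r.support.sup (fun j => (r.coeff j).natDegree) + v * r.natDegree,
    fun i j hij => ?_⟩
  by_cases hj : j ∈ r.support
  · refine coeff_eq_zero_of_natDegree_lt (lt_of_not_ge fun hi => hij.not_ge ?_)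
    exact add_le_add (Nat.mul_le_mul_left u (hi.trans (Finset.le_sup (f := fun j =>
      (r.coeff j).natDegree) hj))) (Nat.mul_le_mul_left v (le_natDegree_of_mem_supp j hj))
  · simp [coeff₂, notMem_support_iff.mp hj]

lemma eq_C_C_of_weightLE_zero {u v : ℕ} (hu : 0 < u) (hv : 0 < v) {r : R[X][X]}
    (h : WeightLE u v 0 r) : r = C (C (coeff₂ r 0 0)) := by
  ext j i
  rcases Nat.eq_zero_or_pos i with rfl | hi
  · rcases Nat.eq_zero_or_pos j with rfl | hj
    · simp [coeff₂]
    · simpa [coeff₂, coeff_C, hj.ne'] using h 0 j (by positivity)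
  · rw [show (r.coeff j).coeff i = 0 from h i j (by positivity), coeff_C]
    split_ifs <;> simp [coeff_C, hi.ne']

end Semiring

section Ring

variable [Ring R]

@[simp] lemma coeff₂_sub (r s : R[X][X]) (i j : ℕ) :
    coeff₂ (r - s) i j = coeff₂ r i j - coeff₂ s i j := by
  simp [coeff₂]

lemma WeightLE.sub {u v W : ℕ} {r s : R[X][X]} (hr : WeightLE u v W r) (hs : WeightLE u v W s) :
    WeightLE u v W (r - s) :=
  fun i j hij => by rw [coeff₂_sub, hr i j hij, hs i j hij, sub_zero]

end Ring

end Weight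

section PartialX

variable {R : Type*} [Semiring R]

noncomputable def partialX (r : R[X][X]) : R[X][X] := r.sum fun j p => C (derivative p) * X ^ j

lemma coeff_partialX (r : R[X][X]) (n : ℕ) : (partialX r).coeff n = derivative (r.coeff n) := by
  rw [partialX, Polynomial.sum_def, finsetSum_coeff, Finset.sum_eq_single n]
  · simp
  · intro j _ hj
    simp [coeff_X_pow, hj.symm]
  · intro hn
    simp [notMem_support_iff.mp hn]

lemma partialX_add (r s : R[X][X]) : partialX (r + s) = partialX r + partialX s := by
  ext1 n
  simp [coeff_partialX]

lemma partialX_C_mul_X_pow (p : R[X]) (n : ℕ) :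
    partialX (C p * X ^ n) = C (derivative p) * X ^ n := by
  ext1 j
  rw [coeff_partialX, coeff_C_mul_X_pow, coeff_C_mul_X_pow]
  split_ifs <;> simp

lemma coeff_X_mul_derivative (r : R[X]) (j : ℕ) :
    (X * derivative r).coeff j = r.coeff j * j := by
  cases j with
  | zero => simp
  | succ j => rw [coeff_X_mul, coeff_derivative, Nat.cast_succ]

end PartialX

lemma aeval_C_X {R : Type*} [CommSemiring R] (p : R[X]) : aeval (C X : R[X][X]) p = C p := by
  simpa using aeval_algHom_apply (CAlgHom (R := R) (A := R[X])) X p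

section Derivation

variable {k : Type*} [Field k] {m α : ℕ} {d : Derivation k k[X][X] k[X][X]}

lemma derivation_C (hdx : d (C X) = X ^ m) (p : k[X]) : d (C p) = C (derivative p) * X ^ m := by
  rw [← aeval_C_X, Derivation.map_aeval, hdx, aeval_C_X, smul_eq_mul]

lemma derivation_eq (hdx : d (C X) = X ^ m) (hdy : d X = 1 - C X ^ α * X) (r : k[X][X]) :
    d r = X ^ m * partialX r + (1 - C X ^ α * X) * derivative r := by
  induction r using Polynomial.induction_on' with
  | add f g hf hg => rw [map_add, hf, hg, partialX_add, derivative_add]; ring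
  | monomial n p =>
    rw [← C_mul_X_pow_eq_monomial, Derivation.leibniz, Derivation.leibniz_pow, hdy,
      derivation_C hdx, partialX_C_mul_X_pow, derivative_C_mul_X_pow]
    simp only [smul_eq_mul, nsmul_eq_mul, map_mul, map_natCast]
    ring

lemma coeff₂_derivation (hdx : d (C X) = X ^ m) (hdy : d X = 1 - C X ^ α * X) (r : k[X][X])
    (i j : ℕ) :
    coeff₂ (d r) i j =
      (if m ≤ j then ((i : k) + 1) * coeff₂ r (i + 1) (j - m) else 0) +
        ((j : k) + 1) * coeff₂ r i (j + 1) -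
          (if α ≤ i then (j : k) * coeff₂ r (i - α) j else 0) := by
  have hcast (n : ℕ) : ((n : k[X]) + 1) = C ((n : k) + 1) := by simp
  rw [derivation_eq hdx hdy, coeff₂, coeff_add, coeff_X_pow_mul', sub_mul, one_mul, coeff_sub,
    mul_assoc, ← C_pow, coeff_C_mul, coeff_X_mul_derivative, coeff_derivative, X_pow_mul, hcast,
    ← C_eq_natCast]
  simp only [apply_ite (fun p : k[X] => p.coeff i), coeff_add, coeff_sub, coeff_zero,
    coeff_derivative, coeff_mul_X_pow', coeff_partialX, coeff_mul_C, coeff₂]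
  ring_nf

/-- Out-of-range indices are harmless here: a truncated `j - m` or `i - α` lands on a
coefficient of weight above `W`. -/
lemma coeff₂_derivation_of_weightLE (hm : 0 < m) (hdx : d (C X) = X ^ m)
    (hdy : d X = 1 - C X ^ α * X) {W : ℕ} {r : k[X][X]} (hr : WeightLE m (α + 1) W r) {i j : ℕ}
    (hij : m * i + (α + 1) * j = W + m * α) :
    coeff₂ (d r) i j = ((i : k) + 1) * coeff₂ r (i + 1) (j - m) - j * coeff₂ r (i - α) j := by
  rw [coeff₂_derivation hdx hdy, hr i (j + 1) (by rw [mul_add]; omega), mul_zero, add_zero]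
  congr 1
  · split_ifs with hj
    · rfl
    · have : (α + 1) * j < (α + 1) * m := Nat.mul_lt_mul_of_pos_left (by omega) (by omega)
      have e : (α + 1) * m = m * α + m := by ring
      rw [Nat.sub_eq_zero_of_le (by omega), hr (i + 1) 0 (by rw [mul_add]; omega), mul_zero]
  · split_ifs with hi
    · rfl
    · have : m * i < m * α := Nat.mul_lt_mul_of_pos_left (by omega) hm
      rw [Nat.sub_eq_zero_of_le (by omega), hr 0 j (by omega), mul_zero]

variable (k m α) in
/-- `F = m x^(α+1) + (α+1) y^m`, killed by the top-weight part `y^m ∂ₓ - x^α y ∂_y` of `d`. -/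
noncomputable def firstIntegral : k[X][X] :=
  C (C (m : k) * X ^ (α + 1)) + C (C ((α : k) + 1)) * X ^ m

lemma weightLE_firstIntegral : WeightLE m (α + 1) (m * (α + 1)) (firstIntegral k m α) := by
  refine (weightLE_C (natDegree_C_mul_X_pow_le _ _)).add ?_
  simpa using (weightLE_C (u := m) (v := α + 1) (n := 0) (natDegree_C ((α : k) + 1)).le).mul
    (weightLE_X.pow m)

lemma derivation_firstIntegral (hm : 0 < m) (hdx : d (C X) = X ^ m)
    (hdy : d X = 1 - C X ^ α * X) :
    d (firstIntegral k m α) = C (C ((m : k) * (α + 1))) * X ^ (m - 1) := by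
  obtain ⟨m, rfl⟩ : ∃ m', m = m' + 1 := ⟨m - 1, by omega⟩
  have hCC (c : k) : d (C (C c)) = 0 := d.map_algebraMap c
  rw [firstIntegral, map_add, Derivation.leibniz, Derivation.leibniz_pow, derivation_C hdx,
    derivative_C_mul_X_pow, hCC, hdy]
  simp only [smul_eq_mul, nsmul_eq_mul, map_mul, map_pow, map_natCast, Nat.cast_add,
    Nat.cast_one, map_add, map_one, Nat.add_sub_cancel, pow_succ]
  ring

lemma derivation_aeval_firstIntegral (hm : 0 < m) (hdx : d (C X) = X ^ m)
    (hdy : d X = 1 - C X ^ α * X) (P : k[X]) :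
    d (aeval (firstIntegral k m α) P) =
      aeval (firstIntegral k m α) (C ((m : k) * (α + 1)) * derivative P) * X ^ (m - 1) := by
  rw [Derivation.map_aeval, derivation_firstIntegral hm hdx hdy, smul_eq_mul, map_mul (aeval _),
    aeval_C]
  change _ = C (C _) * _ * _
  ring

lemma weightLE_aeval {P : k[X]} {n : ℕ} (hP : P.natDegree ≤ n) :
    WeightLE m (α + 1) (n * (m * (α + 1))) (aeval (firstIntegral k m α) P) := by
  rw [aeval_eq_sum_range]
  exact WeightLE.sum fun e he => ((weightLE_firstIntegral.pow e).smul _).mono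
    (Nat.mul_le_mul_right _ ((Nat.lt_succ_iff.mp (Finset.mem_range.mp he)).trans hP))

lemma weightLE_aeval_mul_X_pow {P : k[X]} {n : ℕ} (hP : P.natDegree ≤ n) :
    WeightLE m (α + 1) ((α + 1) * (m * n + (m - 1)))
      (aeval (firstIntegral k m α) P * X ^ (m - 1)) :=
  ((weightLE_aeval hP).mul (weightLE_X.pow (m - 1))).mono (le_of_eq (by ring))

lemma coeff₂_aeval_mul_X_pow_of_eq (hm : 0 < m) (P : k[X]) {i j : ℕ}
    (hij : m * i + (α + 1) * j = (α + 1) * (m * P.natDegree + (m - 1))) :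
    coeff₂ (aeval (firstIntegral k m α) P * X ^ (m - 1)) i j =
      P.leadingCoeff * coeff₂ (firstIntegral k m α ^ P.natDegree * X ^ (m - 1)) i j := by
  rw [aeval_eq_sum_range, Finset.sum_range_succ, add_mul, coeff₂_add, Finset.sum_mul, coeff₂_sum,
    Finset.sum_eq_zero, zero_add, smul_mul_assoc, coeff₂_smul, leadingCoeff]
  intro e he
  have hlt : (α + 1) * (m * e + (m - 1)) < (α + 1) * (m * P.natDegree + (m - 1)) := by
    have := Finset.mem_range.mp he
    have : m * e < m * P.natDegree := Nat.mul_lt_mul_of_pos_left this hm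
    exact Nat.mul_lt_mul_of_pos_left (by omega) (by omega)
  rw [smul_mul_assoc, coeff₂_smul,
    ((weightLE_firstIntegral.pow e).mul (weightLE_X.pow (m - 1))) i j (by nlinarith), mul_zero]

lemma coeff₂_firstIntegral_pow (hm : 0 < m) {e t : ℕ} (ht : t ≤ e) :
    coeff₂ (firstIntegral k m α ^ e) ((α + 1) * (e - t)) (t * m) =
      e.choose t * (m : k) ^ (e - t) * ((α : k) + 1) ^ t := by
  have hterm (n : ℕ) : (C (C ((α : k) + 1)) * X ^ m) ^ n * C (C (m : k) * X ^ (α + 1)) ^ (e - n) *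
      (e.choose n : k[X][X]) =
      C (C (((α : k) + 1) ^ n * e.choose n * (m : k) ^ (e - n)) * X ^ ((α + 1) * (e - n))) *
        X ^ (n * m) := by
    simp only [map_mul, map_pow, mul_pow, ← pow_mul, map_natCast]
    ring
  rw [firstIntegral, add_comm, add_pow, coeff₂, finsetSum_coeff, Finset.sum_eq_single t]
  · rw [hterm, coeff_C_mul_X_pow, if_pos rfl, coeff_C_mul_X_pow, if_pos rfl]
    ring
  · intro n _ hn
    rw [hterm, coeff_C_mul_X_pow, if_neg (fun h => hn (Nat.eq_of_mul_eq_mul_right hm h).symm)]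
  · intro h
    exact absurd (Finset.mem_range.mpr (Nat.lt_succ_of_le ht)) h

lemma transcendental_firstIntegral [CharZero k] (hm : 0 < m) :
    Transcendental k (firstIntegral k m α) := by
  have hy : (C (C ((α : k) + 1)) * X ^ m : k[X][X]).natDegree = m :=
    natDegree_C_mul_X_pow _ _ (C_ne_zero.mpr (Nat.cast_add_one_ne_zero α))
  have hdeg : (firstIntegral k m α).natDegree = m := by
    rw [firstIntegral, natDegree_add_eq_right_of_natDegree_lt (by rw [natDegree_C, hy]; exact hm),
      hy]
  have hne : firstIntegral k m α ≠ 0 := fun h => by simp [h] at hdeg; omega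
  have := (transcendental_X (R := k[X])).aeval (firstIntegral k m α) (by omega)
    (mem_nonZeroDivisors_of_ne_zero (leadingCoeff_ne_zero.mpr hne))
  exact (by simpa using this : Transcendental k[X] (firstIntegral k m α)).restrictScalars
    C_injective

variable (m α) in
/-- The coefficient equations of `(y^m ∂ₓ - x^α y ∂_y) r = 0` in weight `W + m α`. -/
def LeadingKer (W : ℕ) (r : k[X][X]) : Prop :=
  ∀ i j, m * i + (α + 1) * j = W + m * α →
    ((i : k) + 1) * coeff₂ r (i + 1) (j - m) = j * coeff₂ r (i - α) j

lemma leadingKer_of_coeff₂_derivation (hm : 0 < m) (hdx : d (C X) = X ^ m)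
    (hdy : d X = 1 - C X ^ α * X) {W : ℕ} {r : k[X][X]} (hr : WeightLE m (α + 1) W r)
    (hdr : ∀ i j, m * i + (α + 1) * j = W + m * α → coeff₂ (d r) i j = 0) :
    LeadingKer m α W r := fun i j hij =>
  sub_eq_zero.mp ((coeff₂_derivation_of_weightLE hm hdx hdy hr hij).symm.trans (hdr i j hij))

variable [CharZero k] {W : ℕ} {r : k[X][X]}

lemma descent_step (hr : WeightLE m (α + 1) W r)
    (hker : LeadingKer m α W r)
    {p q : ℕ} (hpq : m * p + (α + 1) * q = W) (hne : coeff₂ r p q ≠ 0) (hq : q ≠ 0) :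
    m ≤ q ∧ (m * (p + (α + 1)) + (α + 1) * (q - m) = W ∧ coeff₂ r (p + (α + 1)) (q - m) ≠ 0) := by
  have h := hker (p + α) q (by rw [mul_add]; omega)
  rw [Nat.add_sub_cancel] at h
  have hne' : coeff₂ r (p + (α + 1)) (q - m) ≠ 0 := fun h0 => by
    rw [add_assoc, h0, mul_zero] at h
    exact mul_ne_zero (Nat.cast_ne_zero.mpr hq) hne h.symm
  have hmq : m ≤ q := by
    by_contra hlt
    have : (α + 1) * q < (α + 1) * m := Nat.mul_lt_mul_of_pos_left (by omega) (by omega)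
    have e : m * (p + (α + 1)) = m * p + (α + 1) * m := by ring
    exact hne' (hr _ _ (by rw [Nat.sub_eq_zero_of_le (by omega)]; omega))
  refine ⟨hmq, ?_, hne'⟩
  obtain ⟨q, rfl⟩ : ∃ q', q = q' + m := ⟨q - m, by omega⟩
  rw [Nat.add_sub_cancel, ← hpq]
  ring

lemma climb_step (hm : 0 < m) (hr : WeightLE m (α + 1) W r)
    (hker : LeadingKer m α W r)
    {p q : ℕ} (hpq : m * p + (α + 1) * q = W) (hne : coeff₂ r p q ≠ 0) (hp : p ≠ 0) :
    α + 1 ≤ p ∧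
      (m * (p - (α + 1)) + (α + 1) * (q + m) = W ∧ coeff₂ r (p - (α + 1)) (q + m) ≠ 0) := by
  obtain ⟨p, rfl⟩ : ∃ p', p = p' + 1 := ⟨p - 1, by omega⟩
  have h := hker p (q + m) (by rw [← hpq]; ring)
  rw [Nat.add_sub_cancel] at h
  have hne' : coeff₂ r (p - α) (q + m) ≠ 0 := fun h0 => by
    rw [h0, mul_zero] at h
    exact mul_ne_zero (Nat.cast_add_one_ne_zero p) hne h
  have hαp : α ≤ p := by
    by_contra hlt
    have : m * p < m * α := Nat.mul_lt_mul_of_pos_left (by omega) hm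
    have e : (α + 1) * (q + m) = (α + 1) * q + m * α + m := by ring
    exact hne' (hr _ _ (by rw [Nat.sub_eq_zero_of_le (by omega), mul_add] at *; omega))
  refine ⟨by omega, ?_, by rwa [Nat.add_sub_add_right]⟩
  obtain ⟨p, rfl⟩ : ∃ p', p = p' + α := ⟨p - α, by omega⟩
  rw [show p + α + 1 - (α + 1) = p by omega, ← hpq]
  ring

lemma bottom_of_coeff₂_ne_zero (hm : 0 < m) (hr : WeightLE m (α + 1) W r)
    (hker : LeadingKer m α W r)
    {p q : ℕ} (hpq : m * p + (α + 1) * q = W) (hne : coeff₂ r p q ≠ 0) :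
    m * (p + (α + 1) * (q / m)) = W ∧ coeff₂ r (p + (α + 1) * (q / m)) 0 ≠ 0 := by
  simpa using (dvd_and_of_step hm (fun _ _ h hq => descent_step hr hker h.1 h.2 hq)
    (N := fun p q => m * p + (α + 1) * q = W ∧ coeff₂ r p q ≠ 0) ⟨hpq, hne⟩).2

lemma dvd_of_coeff₂_ne_zero (hm : 0 < m) (hr : WeightLE m (α + 1) W r)
    (hker : LeadingKer m α W r)
    {p q : ℕ} (hpq : m * p + (α + 1) * q = W) (hne : coeff₂ r p q ≠ 0) : α + 1 ∣ p :=
  (dvd_and_of_step (Nat.succ_pos α) (fun _ _ h hp => climb_step hm hr hker h.1 h.2 hp)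
    (N := fun q p => m * p + (α + 1) * q = W ∧ coeff₂ r p q ≠ 0) ⟨hpq, hne⟩).1

theorem exists_weightLE_pred_sub_aeval (hm : 0 < m) (hdx : d (C X) = X ^ m)
    (hdy : d X = 1 - C X ^ α * X) (hW : 0 < W) (hr : WeightLE m (α + 1) W r)
    (hdr : ∀ i j, m * i + (α + 1) * j = W + m * α → coeff₂ (d r) i j = 0) :
    ∃ P : k[X], WeightLE m (α + 1) (W - 1) (r - aeval (firstIntegral k m α) P) := by
  -- Every nonzero coefficient of weight `W` descends to the same point `(P, 0)`; subtracting the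
  -- multiple of `F ^ s` that matches `r` there clears the whole line.
  by_cases hline : ∀ i j, m * i + (α + 1) * j = W → coeff₂ r i j = 0
  · exact ⟨0, by simpa using hr.pred hline⟩
  push Not at hline
  obtain ⟨p, q, hpq, hne⟩ := hline
  have hker := leadingKer_of_coeff₂_derivation hm hdx hdy hr hdr
  obtain ⟨hP, hPne⟩ := bottom_of_coeff₂_ne_zero hm hr hker hpq hne
  set P := p + (α + 1) * (q / m)
  obtain ⟨s, hs⟩ := dvd_of_coeff₂_ne_zero hm hr hker (q := 0) (by simpa using hP) hPne
  have hsW : W = s * (m * (α + 1)) := by rw [← hP, hs]; ring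
  have hs0 : 0 < s := Nat.pos_of_ne_zero fun h => by simp [h] at hsW; omega
  set c := coeff₂ r P 0 / (m : k) ^ s
  have hFs : aeval (firstIntegral k m α) (c • X ^ s : k[X]) = c • firstIntegral k m α ^ s := by simp
  set g := r - aeval (firstIntegral k m α) (c • X ^ s : k[X])
  have hg : WeightLE m (α + 1) W g := by
    refine hr.sub ?_
    rw [hFs, hsW]
    exact (weightLE_firstIntegral.pow s).smul c
  have hdg (i j : ℕ) (hij : m * i + (α + 1) * j = W + m * α) : coeff₂ (d g) i j = 0 := by
    have hdeg : (C ((m : k) * (α + 1)) * derivative (c • X ^ s)).natDegree ≤ s - 1 :=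
      (natDegree_C_mul_le _ _).trans ((natDegree_derivative_le _).trans
        (Nat.sub_le_sub_right ((natDegree_smul_le _ _).trans (natDegree_X_pow_le _)) 1))
    rw [map_sub, coeff₂_sub, hdr i j hij, derivation_aeval_firstIntegral hm hdx hdy,
      weightLE_aeval_mul_X_pow hdeg i j ?_, sub_zero]
    obtain ⟨s, rfl⟩ : ∃ s', s = s' + 1 := ⟨s - 1, by omega⟩
    obtain ⟨m, rfl⟩ : ∃ m', m = m' + 1 := ⟨m - 1, by omega⟩
    rw [hij, hsW]
    simp only [Nat.add_sub_cancel]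
    ring_nf
    omega
  have hg0 : coeff₂ g P 0 = 0 := by
    have hbot := coeff₂_firstIntegral_pow (k := k) (α := α) hm (Nat.zero_le s)
    simp only [Nat.sub_zero, zero_mul, Nat.choose_zero_right, pow_zero, Nat.cast_one, one_mul,
      mul_one] at hbot
    rw [coeff₂_sub, hFs, coeff₂_smul, hs, hbot, ← hs,
      div_mul_cancel₀ _ (pow_ne_zero _ (Nat.cast_ne_zero.mpr hm.ne')), sub_self]
  refine ⟨c • X ^ s, hg.pred fun i j hij => ?_⟩
  by_contra hne'
  obtain ⟨hP', hne''⟩ :=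
    bottom_of_coeff₂_ne_zero hm hg (leadingKer_of_coeff₂_derivation hm hdx hdy hg hdg) hij hne'
  rw [Nat.eq_of_mul_eq_mul_left hm (hP'.trans hP.symm)] at hne''
  exact hne'' hg0

theorem eq_zero_of_coeff₂_derivation_eq (hm : 2 ≤ m) (hα : 1 ≤ α) (hdx : d (C X) = X ^ m)
    (hdy : d X = 1 - C X ^ α * X) {e : ℕ} (hr : WeightLE m (α + 1) W r)
    (hW : W + m * α = (α + 1) * (m * e + (m - 1))) {γ : k}
    (h : ∀ i j, m * i + (α + 1) * j = W + m * α →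
      coeff₂ (d r) i j = γ * coeff₂ (firstIntegral k m α ^ e * X ^ (m - 1)) i j) : γ = 0 := by
  obtain ⟨m, rfl⟩ : ∃ m', m = m' + 1 := ⟨m - 1, by omega⟩
  simp only [Nat.add_sub_cancel] at h hW ⊢
  -- The equation at `((α + 1) * (e - t), t * (m + 1) + m)` links `y t` and `y (t + 1)`; both ends
  -- of the chain lie above weight `W`.
  refine eq_zero_of_telescoping (e := e) (A := fun t => (α + 1) * (e - t) + 1)
    (B := fun t => t * (m + 1) + m) (c := fun t => e.choose t * (m + 1) ^ (e - t) * (α + 1) ^ t)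
    (y := fun t => coeff₂ r ((α + 1) * (e - t) + 1) (t * (m + 1) - 1))
    (fun t => Nat.succ_pos _) (fun t => by omega) (fun t ht => by positivity [Nat.choose_pos ht])
    ?_ ?_ ?_
  · show coeff₂ r ((α + 1) * (e - 0) + 1) (0 * (m + 1) - 1) = 0
    exact hr _ _ (by simp only [Nat.sub_zero, zero_mul, Nat.zero_sub]; nlinarith)
  · show coeff₂ r ((α + 1) * (e - (e + 1)) + 1) ((e + 1) * (m + 1) - 1) = 0
    rw [Nat.sub_eq_zero_of_le (Nat.le_succ e), show (e + 1) * (m + 1) - 1 = (m + 1) * e + m by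
      rw [add_mul, one_mul, mul_comm]; omega]
    exact hr _ _ (by nlinarith)
  · intro t ht
    obtain ⟨u, rfl⟩ : ∃ u, e = t + u := ⟨e - t, by omega⟩
    have hline : (m + 1) * ((α + 1) * u) + (α + 1) * (t * (m + 1) + m) = W + (m + 1) * α := by
      rw [hW]; ring
    have hF := coeff₂_firstIntegral_pow (k := k) (α := α) (by omega : 0 < m + 1)
      (Nat.le_add_right t u)
    rw [Nat.add_sub_cancel_left] at hF
    have hj : (t + 1) * (m + 1) - 1 = t * (m + 1) + m := by rw [add_mul, one_mul]; omega
    have hnext : coeff₂ r ((α + 1) * u - α) (t * (m + 1) + m) =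
        coeff₂ r ((α + 1) * (u - 1) + 1) (t * (m + 1) + m) := by
      rcases u with _ | u
      · rw [hr _ _ (by simp only [mul_zero, Nat.zero_sub]; nlinarith),
          hr _ _ (by simp only [Nat.zero_sub, mul_zero, zero_add]; nlinarith)]
      · rw [Nat.add_sub_cancel, mul_add, mul_one, Nat.add_sub_assoc (by omega),
          Nat.add_sub_cancel_left]
    have key := h _ _ hline
    rw [coeff₂_derivation_of_weightLE (by omega) hdx hdy hr hline, coeff₂_mul_X_pow,
      show t * (m + 1) + m - (m + 1) = t * (m + 1) - 1 by omega, hnext, hF] at key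
    simp only [Nat.add_sub_cancel_left, Nat.add_sub_add_left, hj]
    push_cast at key ⊢
    linear_combination key

theorem exists_eq_aeval_of_derivation_eq (hm : 2 ≤ m) (hα : 1 ≤ α) (hdx : d (C X) = X ^ m)
    (hdy : d X = 1 - C X ^ α * X) (a b : k) (W : ℕ) :
    ∀ (r : k[X][X]) (Q : k[X]), WeightLE m (α + 1) W r →
      d r = C (C a) * C X + C (C b) + aeval (firstIntegral k m α) Q * X ^ (m - 1) →
      ∃ P : k[X], r = aeval (firstIntegral k m α) P := by
  induction W using Nat.strong_induction_on with
  | _ W ih =>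
  intro r Q hr hdr
  rcases Nat.eq_zero_or_pos W with rfl | hW
  · exact ⟨C (coeff₂ r 0 0),
      by rw [aeval_C]; exact eq_C_C_of_weightLE_zero (by omega) (by omega) hr⟩
  have hlin : WeightLE m (α + 1) m (C (C a) * C X + C (C b) : k[X][X]) := by
    simpa using weightLE_C (u := m) (v := α + 1) (natDegree_linear_le (a := a) (b := b))
  have hmα : m ≤ m * α := Nat.le_mul_of_pos_right m hα
  by_cases hQ : Q ≠ 0 ∧ W + m * α ≤ (α + 1) * (m * Q.natDegree + (m - 1))
  · refine absurd (eq_zero_of_coeff₂_derivation_eq hm hα hdx hdy (e := Q.natDegree)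
      (hr.mono (W' := (α + 1) * (m * Q.natDegree + (m - 1)) - m * α) (by omega)) (by omega)
      fun i j hij => ?_) (leadingCoeff_ne_zero.mpr hQ.1)
    rw [hdr, coeff₂_add, hlin i j (by omega), zero_add,
      coeff₂_aeval_mul_X_pow_of_eq (by omega) Q (by omega)]
  have hdr0 (i j : ℕ) (hij : m * i + (α + 1) * j = W + m * α) : coeff₂ (d r) i j = 0 := by
    rw [hdr, coeff₂_add, hlin i j (by omega), zero_add]
    rcases eq_or_ne Q 0 with rfl | hQ0
    · simp [coeff₂]
    · exact weightLE_aeval_mul_X_pow le_rfl i j (by have := not_and.mp hQ hQ0; omega)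
  obtain ⟨P, hP⟩ := exists_weightLE_pred_sub_aeval (by omega) hdx hdy hW hr hdr0
  obtain ⟨P', hP'⟩ := ih (W - 1) (by omega) _ (Q - C ((m : k) * (α + 1)) * derivative P) hP
    (by rw [map_sub, hdr, derivation_aeval_firstIntegral (by omega) hdx hdy, map_sub, sub_mul]
        ring)
  exact ⟨P' + P, by rw [map_add, ← hP', sub_add_cancel]⟩

end Derivation

end PolyDerivXY

open PolyDerivXY in
/-- Let `k` be a field of characteristic zero, `R = k[x,y]`
(realized as `Polynomial (Polynomial k)`, with `x = C X` and `y = X`), and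
`d` the `k`-derivation with `d x = y ^ m`, `d y = 1 - x ^ α * y`, where
`m ≥ 2` and `α ≥ 1`. If `d r = a x + b` for some `a b : k`, then `r` is a
constant and `a = b = 0`. -/
theorem stmt0 (k : Type*) [Field k] [CharZero k] (m α : ℕ) (hm : 2 ≤ m) (hα : 1 ≤ α)
    (d : Derivation k (Polynomial (Polynomial k)) (Polynomial (Polynomial k)))
    (hdx : d (C X) = X ^ m)
    (hdy : d X = 1 - (C X) ^ α * X)
    (r : Polynomial (Polynomial k)) (a b : k)
    (hr : d r = C (Polynomial.C a) * C X + C (Polynomial.C b)) :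
    (∃ c : k, r = C (Polynomial.C c)) ∧ a = 0 ∧ b = 0 := by
  obtain ⟨W, hW⟩ := exists_weightLE m (α + 1) r
  obtain ⟨P, rfl⟩ :=
    exists_eq_aeval_of_derivation_eq hm hα hdx hdy a b W r 0 hW (by simpa using hr)
  rw [derivation_aeval_firstIntegral (by omega) hdx hdy] at hr
  have hab : C a * X + C b = 0 := by
    simpa [coeff_mul_X_pow', Ne.symm (by omega : m - 1 ≠ 0)] using (congrArg (coeff · 0) hr).symm
  obtain ⟨rfl, rfl⟩ : a = 0 ∧ b = 0 :=
    ⟨by simpa using congrArg (coeff · 1) hab, by simpa using congrArg (coeff · 0) hab⟩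
  have hP : derivative P = 0 := by
    simp only [map_zero, zero_mul, add_zero, mul_eq_zero, pow_eq_zero_iff', X_ne_zero, false_and,
      or_false] at hr
    simpa [mul_ne_zero (Nat.cast_ne_zero.mpr (by omega : m ≠ 0)) (Nat.cast_add_one_ne_zero α)] using
      transcendental_iff.mp (transcendental_firstIntegral (by omega)) _ hr
  refine ⟨⟨P.coeff 0, ?_⟩, rfl, rfl⟩
  conv_lhs => rw [eq_C_of_derivative_eq_zero hP]
  rw [aeval_C]
  rfl
end

section
/- Let k be a field of characteristic zero, R = k[x,y], and d = y^m ∂_x + (1 - x^α y) ∂_y with integers m ≥ 2 and α ≥ 1. Then 1 is not in the image d(R); in particular d(R) contains no unit of R. -/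
open Polynomial

/-!
We build a `k`-linear functional `ℓ` on `k[x,y]` that vanishes on `d(R)` but not at `1`,
with weights `ℓ(xᵃ yᵇ) = w a b`. The condition `ℓ ∘ d = 0` is the recurrence
`b w(a+α, b) = b w(a, b-1) + a w(a-1, b+m)`, which can be solved row by row: row `m` is zero,
the rows `b > m` are solved upwards in `a` from a single `1` at `(α-1, m+2)`, and the rows
`b < m` downwards in `b` from row `m`. Then all weights above row `m` are `≥ 0` and all below it
`≤ 0`, and following the recurrence from `(0,0)` through `(α,1)` to `(2α,2)`, which needs
`m ≥ 2`, gives `w(0,0) ≤ -α/2 < 0`. If `d r` is a unit, it is a nonzero constant `c`, and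
`d(c⁻¹ r) = 1`.
-/

namespace ImageOfDerivation

-- The exponent is `α = β + 1`, which makes the recursion in `a` terminate.
def weight (m β : ℕ) : ℕ → ℕ → ℚ
  | a, b =>
    if b = m then 0
    else if m < b then
      if a ≤ β then (if a = β ∧ b = m + 2 then 1 else 0)
      else weight m β (a - (β + 1)) (b - 1) +
        ((a - (β + 1) : ℕ) : ℚ) / b * weight m β (a - (β + 2)) (b + m)
    else weight m β (a + (β + 1)) (b + 1) - a / (b + 1) * weight m β (a - 1) (b + 1 + m)
  termination_by a b => (if b = m then 0 else if m < b then 1 else 2, if m < b then a else m - b)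
  decreasing_by all_goals (simp_wf; split_ifs <;> simp [Prod.lex_def] <;> omega)

theorem weight_row (m β a : ℕ) : weight m β a m = 0 := by
  rw [weight, if_pos rfl]

theorem weight_seed (m β : ℕ) : weight m β β (m + 2) = 1 := by
  rw [weight, if_neg (by omega), if_pos (by omega), if_pos le_rfl, if_pos ⟨rfl, rfl⟩]

theorem weight_add_succ (m β a b : ℕ) :
    weight m β (a + (β + 1)) (b + 1) =
      weight m β a b + a / (b + 1) * weight m β (a - 1) (b + 1 + m) := by
  rcases lt_or_ge b m with hb | hb
  · conv_rhs => rw [weight, if_neg hb.ne, if_neg (by omega)]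
    ring
  · rw [weight, if_neg (by omega), if_pos (by omega), if_neg (by omega),
      Nat.add_sub_cancel, Nat.add_sub_cancel, (by omega : a + (β + 1) - (β + 2) = a - 1)]
    push_cast
    ring

theorem weight_recurrence (m β a b : ℕ) :
    (b : ℚ) * weight m β (a + (β + 1)) b =
      b * weight m β a (b - 1) + a * weight m β (a - 1) (b + m) := by
  cases b with
  | zero => simp [weight_row]
  | succ b =>
    rw [weight_add_succ, Nat.add_sub_cancel]
    push_cast
    field_simp

section Sign

variable {m β : ℕ}

theorem weight_nonneg_of_lt {b : ℕ} (a : ℕ) (hb : m < b) : 0 ≤ weight m β a b := by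
  induction a using Nat.strong_induction_on generalizing b with
  | _ a ih =>
    rw [weight, if_neg hb.ne', if_pos hb]
    split_ifs with ha
    · exact zero_le_one
    · exact le_rfl
    · have h₁ : 0 ≤ weight m β (a - (β + 1)) (b - 1) := by
        rcases eq_or_lt_of_le (Nat.le_sub_one_of_lt hb) with h | h
        · rw [← h, weight_row]
        · exact ih _ (by omega) h
      have h₂ := ih (a - (β + 2)) (by omega) (b := b + m) (by omega)
      positivity

theorem weight_nonpos_of_le {b : ℕ} (a : ℕ) (hb : b ≤ m) : weight m β a b ≤ 0 := by
  induction h : m - b generalizing a b with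
  | zero => rw [show b = m by omega, weight_row]
  | succ n ih =>
    have h₁ := ih (a + (β + 1)) (b := b + 1) (by omega) (by omega)
    have h₂ := weight_nonneg_of_lt (m := m) (β := β) (a - 1) (b := b + 1 + m) (by omega)
    rw [weight_add_succ] at h₁
    have : (0 : ℚ) ≤ a / (b + 1) * weight m β (a - 1) (b + 1 + m) := by positivity
    linarith

theorem weight_zero_zero_neg (hm : 2 ≤ m) : weight m β 0 0 < 0 := by
  have h₀ := weight_add_succ m β 0 0
  have h₁ := weight_add_succ m β (β + 1) 1
  rw [Nat.add_sub_cancel, (by omega : 1 + 1 + m = m + 2), weight_seed] at h₁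
  have h₂ := weight_nonpos_of_le (β := β) (0 + (β + 1) + (β + 1)) (b := 1 + 1) hm
  simp only [CharP.cast_eq_zero, zero_div, zero_mul, add_zero, zero_add] at h₀ h₁ h₂
  push_cast at h₁
  have : (0 : ℚ) < (β + 1) / (1 + 1) := by positivity
  linarith

end Sign

section Functional

variable {k : Type*} [CommRing k]

noncomputable def weightFunctional (w : ℕ → ℕ → k) : k[X][X] →ₗ[k] k :=
  lsum fun b => lsum fun a => w a b • LinearMap.id

theorem monomial_monomial_eq_smul (a b : ℕ) (c : k) :
    monomial b (monomial a c) = c • (C X ^ a * X ^ b : k[X][X]) := by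
  simp only [← C_mul_X_pow_eq_monomial, Algebra.smul_def, Polynomial.algebraMap_apply,
    algebraMap_eq, map_mul, map_pow]
  ring

theorem weightFunctional_monomial (w : ℕ → ℕ → k) (a b : ℕ) :
    weightFunctional w (C X ^ a * X ^ b) = w a b := by
  rw [← one_smul k (C X ^ a * X ^ b), ← monomial_monomial_eq_smul]
  simp [weightFunctional]

theorem derivation_monomial {m α : ℕ} (d : Derivation k k[X][X] k[X][X])
    (hdx : d (C X) = X ^ m) (hdy : d X = 1 - C X ^ α * X) (a b : ℕ) :
    d (C X ^ a * X ^ b) = a • (C X ^ (a - 1) * X ^ (b + m)) + b • (C X ^ a * X ^ (b - 1)) -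
      b • (C X ^ (a + α) * X ^ b) := by
  cases b with
  | zero => simp [Derivation.leibniz_pow, hdx, mul_comm]
  | succ b =>
    simp only [Derivation.leibniz, Derivation.leibniz_pow, hdx, hdy, smul_eq_mul,
      Nat.add_sub_cancel]
    ring

theorem weightFunctional_derivation_eq_zero {m α : ℕ} (d : Derivation k k[X][X] k[X][X])
    (hdx : d (C X) = X ^ m) (hdy : d X = 1 - C X ^ α * X) {w : ℕ → ℕ → k}
    (hw : ∀ a b : ℕ, (b : k) * w (a + α) b = b * w a (b - 1) + a * w (a - 1) (b + m))
    (f : k[X][X]) : weightFunctional w (d f) = 0 := by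
  induction f using Polynomial.induction_on' with
  | add p q hp hq => rw [map_add, map_add, hp, hq, add_zero]
  | monomial b p =>
    induction p using Polynomial.induction_on' with
    | add p q hp hq => rw [map_add, map_add, map_add, hp, hq, add_zero]
    | monomial a c =>
      rw [monomial_monomial_eq_smul, d.map_smul, map_smul, derivation_monomial d hdx hdy, map_sub,
        map_add, map_nsmul, map_nsmul, map_nsmul, weightFunctional_monomial,
        weightFunctional_monomial, weightFunctional_monomial, nsmul_eq_mul, nsmul_eq_mul,
        nsmul_eq_mul, hw]
      ring

end Functional

theorem _root_.Derivation.exists_apply_eq_one_of_isUnit {k : Type*} [Field k]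
    (d : Derivation k k[X][X] k[X][X]) {r : k[X][X]} (hr : IsUnit (d r)) :
    ∃ s, d s = 1 := by
  obtain ⟨p, hp, hpr⟩ := Polynomial.isUnit_iff.mp hr
  obtain ⟨c, hc, rfl⟩ := Polynomial.isUnit_iff.mp hp
  refine ⟨c⁻¹ • r, ?_⟩
  rw [d.map_smul, ← hpr, smul_C, smul_C, smul_eq_mul, inv_mul_cancel₀ hc.ne_zero, map_one,
    map_one]

end ImageOfDerivation

open ImageOfDerivation in
/-- with `R = k[x,y]` and `d = y^m ∂x + (1 - x^α y) ∂y`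
(`m ≥ 2`, `α ≥ 1`), `1` is not in the image of `d`; in particular the image
of `d` contains no unit of `R`. -/
theorem stmt1 (k : Type*) [Field k] [CharZero k] (m α : ℕ) (hm : 2 ≤ m) (hα : 1 ≤ α)
    (d : Derivation k (Polynomial (Polynomial k)) (Polynomial (Polynomial k)))
    (hdx : d (C X) = X ^ m)
    (hdy : d X = 1 - (C X) ^ α * X) :
    (∀ r : Polynomial (Polynomial k), d r ≠ 1) ∧
    (∀ r : Polynomial (Polynomial k), ¬ IsUnit (d r)) := by
  obtain ⟨β, rfl⟩ : ∃ β, α = β + 1 := ⟨α - 1, by omega⟩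
  set ℓ := weightFunctional fun a b => (weight m β a b : k)
  have hℓd (r) : ℓ (d r) = 0 :=
    weightFunctional_derivation_eq_zero d hdx hdy
      (fun a b => by exact_mod_cast weight_recurrence m β a b) r
  have hℓ1 : ℓ 1 ≠ 0 := by
    rw [show (1 : k[X][X]) = C X ^ 0 * X ^ 0 by simp, weightFunctional_monomial]
    exact_mod_cast (weight_zero_zero_neg hm).ne
  have hne (r) : d r ≠ 1 := fun hr => hℓ1 (hr ▸ hℓd r)
  exact ⟨hne, fun r hr => (d.exists_apply_eq_one_of_isUnit hr).elim fun s hs => hne s hs⟩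
end

section
/- Let k be a field of characteristic zero, R = k[x,y], and d the derivation with d(x) = y^m, d(y) = 1 - x^α y, m ≥ 2, α ≥ 1. Suppose r = Σ_{i=0}^{l} f_i(x) y^i with l > 0, f_l ≠ 0, and d(r) = a x + b for some a, b ∈ k. Then f_l, f_{l-1}, ..., f_{l-m+1} all lie in k (i.e., are constant polynomials in x). -/
open Polynomial

lemma dC_aux (k : Type*) [Field k] (m : ℕ)
    (d : Derivation k (Polynomial (Polynomial k)) (Polynomial (Polynomial k)))
    (hdx : d (C X) = X ^ m) (p : Polynomial k) :
    d (C p) = C (derivative p) * X ^ m := by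
  induction p using Polynomial.induction_on' with
  | add p q hp hq => rw [map_add, map_add, hp, hq, derivative_add, map_add, add_mul]
  | monomial n c =>
    rw [← C_mul_X_pow_eq_monomial, derivative_C_mul_X_pow]
    rw [map_mul, map_pow, Derivation.leibniz]
    have h1 : d (C (Polynomial.C c)) = 0 := by
      have : (C (Polynomial.C c) : Polynomial (Polynomial k))
          = algebraMap k (Polynomial (Polynomial k)) c := rfl
      rw [this, Derivation.map_algebraMap]
    rw [h1, Derivation.leibniz_pow, hdx]
    simp only [smul_eq_mul, mul_zero, zero_add, smul_smul, nsmul_eq_mul,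
      map_mul, map_pow, map_natCast]
    ring

/-- `R = k[x,y] = Polynomial (Polynomial k)` (`x = C X`, `y = X`),
`d x = y^m`, `d y = 1 - x^α y`, `m ≥ 2`, `α ≥ 1`.  If
`r = Σ_{i=0}^l f_i(x) y^i` with `l > 0`, `f_l ≠ 0` (with the convention
`f_i = 0` for `i > l` or `i < 0`) and `d r = a x + b`, then
`f_l, f_{l-1}, …, f_{l-m+1}` are all constant polynomials. -/
theorem stmt8 (k : Type*) [Field k] [CharZero k] (m α : ℕ) (hm : 2 ≤ m) (hα : 1 ≤ α)
    (d : Derivation k (Polynomial (Polynomial k)) (Polynomial (Polynomial k)))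
    (hdx : d (C X) = X ^ m)
    (hdy : d X = 1 - (C X) ^ α * X)
    (l : ℕ) (hl : 0 < l) (f : ℤ → Polynomial k)
    (hf0 : ∀ j : ℤ, ((l : ℤ) < j ∨ j < 0) → f j = 0)
    (hfl : f l ≠ 0)
    (r : Polynomial (Polynomial k))
    (hrsum : r = ∑ i ∈ Finset.range (l + 1), C (f i) * X ^ i)
    (a b : k) (hr : d r = C (Polynomial.C a) * C X + C (Polynomial.C b)) :
    ∀ s : ℕ, s ≤ m - 1 → ∃ c : k, f ((l : ℤ) - s) = Polynomial.C c := by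
  intro s hs
  by_cases hsl : s ≤ l
  case neg =>
    refine ⟨0, ?_⟩
    rw [hf0 _ (Or.inr (by omega)), map_zero]
  case pos =>
    set n := l - s + m with hn
    have hnl : l + 1 ≤ n := by omega
    have key : (d r).coeff n = derivative (f ((l - s : ℕ) : ℤ)) := by
      rw [hrsum, map_sum, finset_sum_coeff]
      have hterm : ∀ i ∈ Finset.range (l + 1), (d (C (f i) * X ^ i)).coeff n
          = if l - s = i then derivative (f (i : ℤ)) else 0 := by
        intro i hi
        rw [Finset.mem_range] at hi
        have expand : d (C (f i) * X ^ i) =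
            C (derivative (f (i : ℤ))) * X ^ (m + i)
            + i • (C (f (i : ℤ)) * X ^ (i - 1))
            - i • (C (X ^ α * f (i : ℤ)) * X ^ ((i - 1) + 1)) := by
          rw [Derivation.leibniz, dC_aux k m d hdx, Derivation.leibniz_pow, hdy]
          simp only [smul_eq_mul, nsmul_eq_mul, map_mul, map_pow]
          ring
        rw [expand, coeff_sub, coeff_add, coeff_smul, coeff_smul,
          coeff_C_mul, coeff_C_mul, coeff_C_mul, coeff_X_pow, coeff_X_pow, coeff_X_pow]
        rw [if_neg (by omega : ¬ n = i - 1), if_neg (by omega : ¬ n = i - 1 + 1)]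
        simp only [mul_zero, smul_zero, add_zero, sub_zero]
        by_cases hni : l - s = i
        · rw [if_pos hni, if_pos (by omega), mul_one]
        · rw [if_neg hni, if_neg (by omega), mul_zero]
      rw [Finset.sum_congr rfl hterm, Finset.sum_ite_eq]
      rw [if_pos (Finset.mem_range.mpr (by omega))]
    have hzero : derivative (f ((l - s : ℕ) : ℤ)) = 0 := by
      rw [← key, hr]
      simp only [coeff_add, coeff_C_mul, coeff_C, if_neg (show ¬ n = 0 by omega),
        mul_zero, add_zero]
    have hcast : ((l : ℤ) - s) = ((l - s : ℕ) : ℤ) := by omega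
    rw [hcast]
    exact ⟨(f ((l - s : ℕ) : ℤ)).coeff 0, eq_C_of_derivative_eq_zero hzero⟩
end

section
/- Let k be a field of characteristic zero, R = k[x,y], d(x) = y^m, d(y) = 1 - x^α y, m ≥ 2, α ≥ 1. Suppose r = Σ_{i=0}^{l} f_i(x) y^i with l > 0, f_l = 1, and d(r) = a x + b for some a, b ∈ k. Then f_i(x) = (a x^{(i-1)α+1} + b x^{(i-1)α})/i for all 1 ≤ i ≤ m. -/
open Polynomial

/-- with `R = k[x,y]`, `d x = y^m`, `d y = 1 - x^α y`
(`m ≥ 2`, `α ≥ 1`), if `r = Σ_{i=0}^l f_i(x) y^i` with `l > 0`, `f_l = 1`,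
and `d r = a x + b`, then `f_i(x) = (a x^{(i-1)α+1} + b x^{(i-1)α})/i`
for all `1 ≤ i ≤ m`. -/
theorem stmt10 (k : Type*) [Field k] [CharZero k] (m α : ℕ) (hm : 2 ≤ m) (hα : 1 ≤ α)
    (d : Derivation k (Polynomial (Polynomial k)) (Polynomial (Polynomial k)))
    (hdx : d (C X) = X ^ m)
    (hdy : d X = 1 - (C X) ^ α * X)
    (l : ℕ) (hl : 0 < l) (f : ℤ → Polynomial k)
    (hf0 : ∀ j : ℤ, ((l : ℤ) < j ∨ j < 0) → f j = 0)
    (hfl : f l = 1)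
    (r : Polynomial (Polynomial k))
    (hrsum : r = ∑ i ∈ Finset.range (l + 1), C (f i) * X ^ i)
    (a b : k) (hr : d r = C (Polynomial.C a) * C X + C (Polynomial.C b)) :
    ∀ i : ℕ, 1 ≤ i → i ≤ m →
      f i = Polynomial.C ((i : k)⁻¹) *
        (Polynomial.C a * X ^ ((i - 1) * α + 1) + Polynomial.C b * X ^ ((i - 1) * α)) := by
  -- Step 1: `C p = aeval (C X) p`, so that the chain rule applies.
  have hCaeval : ∀ p : Polynomial k,
      (C p : Polynomial (Polynomial k)) = aeval (C X : Polynomial (Polynomial k)) p := by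
    intro p
    induction p using Polynomial.induction_on with
    | C a => simp [Polynomial.algebraMap_apply]
    | add p q hp hq => simp [hp, hq]
    | monomial n c ih => simp only [map_mul, map_pow, aeval_X, aeval_C,
        Polynomial.algebraMap_apply, Polynomial.algebraMap_eq, C_pow]
  -- Step 2: the derivation on the coefficient ring.
  have dC : ∀ p : Polynomial k, d (C p) = C (derivative p) * X ^ m := by
    intro p
    rw [hCaeval, Derivation.comp_aeval_eq, hdx, ← hCaeval, smul_eq_mul]
  -- Step 3: the derivation of a single term `f_i(x) y^i`.
  have dterm : ∀ (p : Polynomial k) (i : ℕ),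
      d (C p * X ^ i) = C (derivative p) * X ^ (m + i)
        + i • (C p * X ^ (i - 1)) - i • (C (X ^ α * p) * X ^ i) := by
    intro p i
    rw [Derivation.leibniz, Derivation.leibniz_pow, hdy, dC]
    cases i with
    | zero => simp [smul_eq_mul]
    | succ n =>
      simp only [Nat.add_sub_cancel, smul_eq_mul, nsmul_eq_mul, map_mul, map_pow,
        Nat.cast_add, Nat.cast_one]
      ring
  -- Step 4: the recurrence from comparing coefficients of `y^j` for `j < m`.
  have key : ∀ j : ℕ, j < m → ((j:ℕ)+1) • f ((j:ℤ)+1) - j • (X ^ α * f j)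
      = if j = 0 then (Polynomial.C a * X + Polynomial.C b) else 0 := by
    intro j hj
    have h := congrArg (fun q => Polynomial.coeff q j) hr
    simp only [hrsum, map_sum, dterm, finset_sum_coeff, coeff_add, coeff_sub, coeff_smul,
      coeff_C_mul, coeff_X_pow, ← C_mul, coeff_C] at h
    rw [Finset.sum_sub_distrib, Finset.sum_add_distrib] at h
    have e1 : ∑ i ∈ Finset.range (l + 1),
        derivative (f ↑i) * (if j = m + i then (1:Polynomial k) else 0) = 0 := by
      apply Finset.sum_eq_zero
      intro i _
      rw [if_neg (by omega), mul_zero]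
    have e2 : ∑ i ∈ Finset.range (l + 1),
        i • (f ↑i * (if j = i - 1 then (1:Polynomial k) else 0))
        = ((j:ℕ)+1) • f ((j:ℤ)+1) := by
      have : ∀ i ∈ Finset.range (l + 1),
          i • (f ↑i * (if j = i - 1 then (1:Polynomial k) else 0))
          = if i = j + 1 then ((j:ℕ)+1) • f ((j:ℤ)+1) else 0 := by
        intro i _
        rcases eq_or_ne i (j+1) with rfl | hne
        · rw [if_pos rfl, if_pos (by omega), mul_one]
          norm_num
        · rw [if_neg hne]
          rcases Nat.eq_zero_or_pos i with rfl | hi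
          · simp
          · rw [if_neg (by omega), mul_zero, smul_zero]
      rw [Finset.sum_congr rfl this, Finset.sum_ite_eq' (Finset.range (l+1)) (j+1)]
      by_cases hmem : j + 1 ∈ Finset.range (l + 1)
      · rw [if_pos hmem]
      · rw [if_neg hmem]
        have : f ((j:ℤ)+1) = 0 := by
          apply hf0; left
          simp only [Finset.mem_range] at hmem
          omega
        rw [this, smul_zero]
    have e3 : ∑ i ∈ Finset.range (l + 1),
        i • ((X ^ α * f ↑i) * (if j = i then (1:Polynomial k) else 0))
        = j • (X ^ α * f j) := by
      have : ∀ i ∈ Finset.range (l + 1),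
          i • ((X ^ α * f ↑i) * (if j = i then (1:Polynomial k) else 0))
          = if i = j then j • (X ^ α * f j) else 0 := by
        intro i _
        rcases eq_or_ne i j with rfl | hne
        · rw [if_pos rfl, if_pos rfl, mul_one]
        · rw [if_neg hne, if_neg (Ne.symm hne), mul_zero, smul_zero]
      rw [Finset.sum_congr rfl this, Finset.sum_ite_eq' (Finset.range l.succ) j]
      by_cases hmem : j ∈ Finset.range (l + 1)
      · rw [if_pos hmem]
      · rw [if_neg hmem]
        have : f (j:ℤ) = 0 := by
          apply hf0; left
          simp only [Finset.mem_range] at hmem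
          omega
        rw [this, mul_zero, smul_zero]
    rw [e1, e2, e3, zero_add] at h
    rw [h]
    by_cases h0 : j = 0 <;> simp [h0]
  -- Step 5: the induction, first without the division by `i`.
  have claim : ∀ i : ℕ, 1 ≤ i → i ≤ m →
      ((i:ℕ) : Polynomial k) * f i
        = Polynomial.C a * X ^ ((i - 1) * α + 1) + Polynomial.C b * X ^ ((i - 1) * α) := by
    intro i hi1
    induction i, hi1 using Nat.le_induction with
    | base =>
      intro _
      have h := key 0 (by omega)
      simp only [if_pos rfl, Nat.cast_zero, zero_add, zero_smul, sub_zero, one_smul,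
        Nat.cast_one] at h ⊢
      simpa using h
    | succ n hn ih =>
      intro hnm
      have hrec := key n (by omega)
      rw [if_neg (by omega), sub_eq_zero] at hrec
      have ihn := ih (by omega)
      have hexp : (n - 1) * α + α = n * α := by
        have h1 : n - 1 + 1 = n := by omega
        calc (n - 1) * α + α = ((n - 1) + 1) * α := by ring
          _ = n * α := by rw [h1]
      have : ((n + 1 : ℕ) : Polynomial k) * f ((n:ℤ)+1)
          = X ^ α * (((n:ℕ) : Polynomial k) * f n) := by
        rw [← nsmul_eq_mul, hrec, nsmul_eq_mul]
        ring
      push_cast at this ⊢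
      rw [this, ihn,
        show n * α + 1 = α + ((n - 1) * α + 1) from by rw [← hexp]; ring,
        show n * α = α + (n - 1) * α from by rw [← hexp]; ring,
        pow_add, pow_add]
      ring
  -- Step 6: divide by `i`.
  intro i hi1 him
  have hne : ((i:ℕ) : k) ≠ 0 := by
    have : 0 < i := hi1
    exact_mod_cast Nat.cast_pos.mpr this |>.ne'
  have h := claim i hi1 him
  have : f i = Polynomial.C ((i : k)⁻¹) * (((i:ℕ) : Polynomial k) * f i) := by
    rw [← mul_assoc, ← Polynomial.C_eq_natCast, ← map_mul, inv_mul_cancel₀ hne, map_one, one_mul]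
  rw [this, h]
end

section
/- Let k be a field of characteristic zero, R = k[x,y], d(x) = y^m, d(y) = 1 - x^α y, m ≥ 2, α ≥ 1. Suppose r = Σ_{i=0}^{l} f_i(x) y^i with l > 0, f_l ≠ 0, and d(r) = a x + b. Let j_0 be the greatest positive integer with l - m(j_0 - 1) > 0. Then l = m j_0, and for all 1 ≤ j ≤ j_0: deg_x f_{l - m j}(x) = j(α+1), while deg_x f_{l - m j + s}(x) ≤ (j-1)(α+1) for all 1 ≤ s ≤ m - 1. -/
/-!
Write `f_i` for the coefficient of `y^i` in `r`. Since `d r = ∂ₓr · y^m + ∂ᵧr · (1 - x^α y)`,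
comparing coefficients of `y^n` (`n ≥ 1`) in `d r = a x + b` gives
`f'_{n-m} = n x^α f_n - (n+1) f_{n+1}`.
At `n = l + m` this makes `f_l` constant. Going down in steps of `m`: if `deg f_N = D` and the
`m` coefficients just above `N` have degree `≤ E` with `E + α < D`, the term `N x^α f_N` dominates,
so `deg f_{N-m} = D + α + 1` (characteristic zero), while the coefficients strictly between
`N - m` and `N` have derivatives of degree `< D`, hence degree `≤ D`. After `j` steps this is
the degree pattern of the theorem; `f_{l - m j₀} ≠ 0` forces `m j₀ ≤ l`, and the maximality of
`j₀` gives the reverse inequality.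
-/

open Polynomial

namespace Polynomial

section PartialX
variable {R : Type*} [CommRing R]

/-- For `r ∈ R[x][y]` (inner variable `x = C X`, outer variable `y = X`), the partial derivative
`∂r/∂x`. -/
noncomputable def partialX (r : R[X][X]) : R[X][X] :=
  r.sum fun n p => monomial n (derivative p)

@[simp]
theorem coeff_partialX (r : R[X][X]) (n : ℕ) :
    (partialX r).coeff n = derivative (r.coeff n) := by
  rw [partialX, coeff_sum, Polynomial.sum_def]
  simp only [coeff_monomial, Finset.sum_ite_eq', mem_support_iff]
  split_ifs with h
  · rfl
  · rw [notMem_support_iff.mp h, map_zero]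

theorem partialX_add (p q : R[X][X]) : partialX (p + q) = partialX p + partialX q := by
  ext1 n
  simp

theorem partialX_monomial (n : ℕ) (p : R[X]) :
    partialX (monomial n p) = monomial n (derivative p) := by
  ext1 i
  simp [coeff_monomial, apply_ite derivative]

end PartialX

section Degree
variable {R : Type*} [Semiring R] [IsAddTorsionFree R]

theorem degree_eq_succ_of_degree_derivative_eq {g : R[X]} {K : ℕ}
    (h : (derivative g).degree = K) : g.degree = ↑(K + 1) := by
  have hg : g.natDegree ≠ 0 := by
    rw [← derivative_ne_zero]
    rintro h0
    simp [h0] at h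
  rw [degree_derivative hg, Nat.cast_inj] at h
  rw [degree_eq_natDegree (ne_zero_of_natDegree_gt (Nat.pos_of_ne_zero hg))]
  exact_mod_cast (by omega : g.natDegree = K + 1)

theorem degree_le_of_degree_derivative_lt {g : R[X]} {D : ℕ}
    (h : (derivative g).degree < D) : g.degree ≤ D := by
  by_cases hg : g.natDegree = 0
  · exact degree_le_natDegree.trans (by simp [hg])
  · rw [degree_derivative hg, Nat.cast_lt] at h
    rw [degree_eq_natDegree (ne_zero_of_natDegree_gt (Nat.pos_of_ne_zero hg))]
    exact_mod_cast (by omega : g.natDegree ≤ D)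

end Degree

theorem degree_intCast_mul {k : Type*} [Field k] [CharZero k] {n : ℤ} (hn : n ≠ 0) (p : k[X]) :
    ((n : k[X]) * p).degree = p.degree := by
  rw [← C_eq_intCast, degree_C_mul (Int.cast_ne_zero.2 hn)]

end Polynomial

theorem Derivation.apply_eq_partialX_mul_add_derivative_mul {R : Type*} [CommRing R]
    (D : Derivation R R[X][X] R[X][X]) (r : R[X][X]) :
    D r = partialX r * D (C X) + derivative r * D X := by
  have hC : ∀ p : R[X], D (C p) = C (derivative p) * D (C X) := fun p => by
    have h := D.map_aeval p (C X)
    have hCX : ∀ q : R[X], aeval (C X : R[X][X]) q = C q := fun q => by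
      simpa using aeval_algHom_apply (CAlgHom : R[X] →ₐ[R] R[X][X]) X q
    rwa [hCX, hCX, smul_eq_mul] at h
  induction r using Polynomial.induction_on' with
  | add p q hp hq => rw [map_add, hp, hq, partialX_add, derivative_add]; ring
  | monomial n p =>
    rw [partialX_monomial, ← C_mul_X_pow_eq_monomial, ← C_mul_X_pow_eq_monomial, D.leibniz,
      D.leibniz_pow, hC, derivative_C_mul_X_pow]
    simp only [smul_eq_mul, nsmul_eq_mul, map_mul, C_eq_natCast]
    ring

section Recurrence
variable {k : Type*} [Field k]

/-- The coefficient of `y^n` in `∂ₓr · y^m + ∂ᵧr · (1 - x^α y)`, for `r = ∑ f_i y^i`, is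
`f'_{n-m} + (n+1) f_{n+1} - n x^α f_n`; this says that it vanishes for `n ≥ 1`. -/
def CoeffRecurrence (m α : ℕ) (f : ℤ → k[X]) : Prop :=
  ∀ n : ℤ, 0 < n →
    derivative (f (n - m)) = X ^ α * ((n : k[X]) * f n) - ((n + 1 : ℤ) : k[X]) * f (n + 1)

theorem coeffRecurrence_of_coeff_derivation_eq_zero {m α : ℕ}
    (d : Derivation k k[X][X] k[X][X]) (hdx : d (C X) = X ^ m)
    (hdy : d X = 1 - C X ^ α * X) {r : k[X][X]} {f : ℤ → k[X]}
    (hcoeff : ∀ i : ℕ, r.coeff i = f i) (hneg : ∀ i : ℤ, i < 0 → f i = 0)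
    (hr : ∀ n : ℕ, 0 < n → (d r).coeff n = 0) : CoeffRecurrence m α f := by
  intro n hn
  obtain ⟨n, rfl⟩ : ∃ n' : ℕ, n = n' + 1 := ⟨n.toNat - 1, by omega⟩
  have h := hr (n + 1) n.succ_pos
  have hdr : d r = partialX r * X ^ m + derivative r - C (X ^ α) * (derivative r * X) := by
    rw [d.apply_eq_partialX_mul_add_derivative_mul, hdx, hdy, map_pow]
    ring
  rw [hdr, coeff_sub, coeff_add, coeff_C_mul, coeff_mul_X, coeff_mul_X_pow', coeff_partialX,
    coeff_derivative, coeff_derivative] at h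
  simp only [hcoeff] at h
  have hshift : (if m ≤ n + 1 then derivative (f (n + 1 - m : ℕ)) else 0)
      = derivative (f ((n + 1 : ℕ) - m)) := by
    split_ifs with hm
    · rw [Nat.cast_sub hm]
    · rw [hneg _ (by omega), map_zero]
  rw [hshift] at h
  push_cast at h ⊢
  linear_combination h

variable [CharZero k] {f : ℤ → k[X]} {m α : ℕ}

namespace CoeffRecurrence

theorem degree_eq_zero (hrec : CoeffRecurrence m α f) (hm : 0 < m) {l : ℕ} (hfl : f l ≠ 0)
    (habove : ∀ i : ℤ, l < i → f i = 0) : (f l).degree = 0 := by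
  have h := hrec (l + m) (by omega)
  rw [add_sub_cancel_right, habove (l + m) (by omega), habove (l + m + 1) (by omega), mul_zero,
    mul_zero, mul_zero, sub_zero, derivative_eq_zero] at h
  rw [degree_eq_natDegree hfl, h, Nat.cast_zero]

theorem degree_sub_eq_and_degree_le (hrec : CoeffRecurrence m α f) (hm : 0 < m) {N : ℤ}
    (hN : 0 < N) {D : ℕ} {E : WithBot ℕ} (hD : (f N).degree = D)
    (hE : ∀ s : ℕ, 1 ≤ s → s ≤ m → (f (N + s)).degree ≤ E) (hED : E + α < D) :
    (f (N - m)).degree = ↑(α + D + 1) ∧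
      ∀ s : ℕ, 1 ≤ s → s ≤ m → (f (N - m + s)).degree ≤ D := by
  have hE_lt : E < D := (le_add_of_nonneg_right (WithBot.coe_nonneg.2 α.zero_le)).trans_lt hED
  constructor
  · have hlead : (X ^ α * ((N : k[X]) * f N)).degree = ↑(α + D) := by
      rw [degree_mul, degree_X_pow, degree_intCast_mul hN.ne', hD, Nat.cast_add]
    have hnext : (((N + 1 : ℤ) : k[X]) * f (N + 1)).degree < ↑(α + D) := by
      rw [degree_intCast_mul (by omega)]
      calc (f (N + 1)).degree ≤ E := mod_cast hE 1 le_rfl hm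
        _ < D := hE_lt
        _ ≤ ↑(α + D) := by norm_cast; omega
    apply degree_eq_succ_of_degree_derivative_eq
    rw [hrec N hN, degree_sub_eq_left_of_degree_lt (hlead ▸ hnext), hlead]
  · intro s hs hsm
    rcases hsm.eq_or_lt with rfl | hsm
    · rw [sub_add_cancel, hD]
    apply degree_le_of_degree_derivative_lt
    rw [sub_add_eq_add_sub, hrec (N + s) (by omega)]
    refine (degree_sub_le _ _).trans_lt (max_lt ?_ ?_)
    · rw [degree_mul, degree_X_pow, degree_intCast_mul (by omega), add_comm]
      exact (add_le_add_left (hE s hs hsm.le) _).trans_lt hED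
    · have hnext := hE (s + 1) (by omega) hsm
      rw [Nat.cast_succ, ← add_assoc] at hnext
      rw [degree_intCast_mul (by omega)]
      exact hnext.trans_lt hE_lt

theorem degree_sub_mul (hrec : CoeffRecurrence m α f) (hm : 0 < m) {l : ℕ} (hfl : f l ≠ 0)
    (habove : ∀ i : ℤ, l < i → f i = 0) {i : ℕ} (hi : m * i < l) :
    (f (l - m * (i + 1))).degree = ↑((i + 1) * (α + 1)) ∧
      ∀ s : ℕ, 1 ≤ s → s ≤ m → (f (l - m * (i + 1) + s)).degree ≤ ↑(i * (α + 1)) := by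
  induction i with
  | zero =>
    have hbase := hrec.degree_sub_eq_and_degree_le hm (N := l) (by omega) (E := ⊥)
      (hrec.degree_eq_zero hm hfl habove)
      (fun s hs _ => by rw [habove _ (by omega), degree_zero]) (by simp)
    simpa using hbase
  | succ i ih =>
    have hi' : (m : ℤ) * (i + 1) < l := by exact_mod_cast hi
    obtain ⟨hD, hE⟩ := ih ((Nat.mul_le_mul_left m i.le_succ).trans_lt hi)
    have hstep := hrec.degree_sub_eq_and_degree_le hm (by linarith) hD hE
      (by norm_cast; ring_nf; omega)
    simp only [Nat.cast_add, Nat.cast_one]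
    rw [show (l : ℤ) - m * (i + 1 + 1) = l - m * (i + 1) - m by ring]
    exact ⟨hstep.1.trans (by congr 1; ring), hstep.2⟩

end CoeffRecurrence

end Recurrence

theorem stmt11_general (k : Type*) [Field k] [CharZero k] (m α : ℕ) (hm : 2 ≤ m)
    (d : Derivation k (Polynomial (Polynomial k)) (Polynomial (Polynomial k)))
    (hdx : d (C X) = X ^ m)
    (hdy : d X = 1 - (C X) ^ α * X)
    (l : ℕ) (f : ℤ → Polynomial k)
    (hf0 : ∀ j : ℤ, ((l : ℤ) < j ∨ j < 0) → f j = 0)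
    (hfl : f l ≠ 0)
    (r : Polynomial (Polynomial k))
    (hrsum : r = ∑ i ∈ Finset.range (l + 1), C (f i) * X ^ i)
    (a b : k) (hr : d r = C (Polynomial.C a) * C X + C (Polynomial.C b))
    (j₀ : ℕ) (hj₀pos : 0 < j₀) (hj₀ : m * (j₀ - 1) < l)
    (hj₀max : ∀ j : ℕ, 0 < j → m * (j - 1) < l → j ≤ j₀) :
    l = m * j₀ ∧
    ∀ j : ℕ, 1 ≤ j → j ≤ j₀ →
      (f ((l : ℤ) - m * j)).degree = ((j * (α + 1) : ℕ) : WithBot ℕ) ∧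
      ∀ s : ℕ, 1 ≤ s → s ≤ m - 1 →
        (f ((l : ℤ) - m * j + s)).degree ≤ (((j - 1) * (α + 1) : ℕ) : WithBot ℕ) := by
  have hcoeff : ∀ i : ℕ, r.coeff i = f i := fun i => by
    rw [hrsum, finsetSum_coeff]
    simp only [coeff_C_mul_X_pow, Finset.sum_ite_eq, Finset.mem_range]
    split_ifs with hi
    · rfl
    · exact (hf0 i (Or.inl (by omega))).symm
  have hdr : ∀ n : ℕ, 0 < n → (d r).coeff n = 0 := fun n hn => by
    rw [hr, ← map_mul, ← map_add, coeff_C, if_neg hn.ne']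
  have hrec := coeffRecurrence_of_coeff_derivation_eq_zero d hdx hdy hcoeff
    (fun i hi => hf0 i (Or.inr hi)) hdr
  have hdeg (i : ℕ) := hrec.degree_sub_mul (by omega) hfl (fun i hi => hf0 i (Or.inl hi)) (i := i)
  have hl : l = m * j₀ := by
    refine le_antisymm (not_lt.mp fun h => ?_) ?_
    · have := hj₀max (j₀ + 1) j₀.succ_pos (by simpa using h)
      omega
    · have hD := (hdeg (j₀ - 1) hj₀).1
      rw [show ((j₀ - 1 : ℕ) : ℤ) + 1 = j₀ by omega] at hD
      by_contra! h
      have h' : (l : ℤ) < m * j₀ := by exact_mod_cast h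
      rw [hf0 _ (Or.inr (by linarith)), degree_zero] at hD
      exact WithBot.bot_ne_coe hD
  refine ⟨hl, fun j hj1 hj => ?_⟩
  obtain ⟨i, rfl⟩ : ∃ i, j = i + 1 := ⟨j - 1, by omega⟩
  obtain ⟨hD, hE⟩ := hdeg i ((Nat.mul_le_mul_left m (by omega)).trans_lt hj₀)
  push_cast
  exact ⟨hD, fun s hs1 hs2 => hE s hs1 (by omega)⟩

/-- with `R = k[x,y]`, `d x = y^m`, `d y = 1 - x^α y`
(`m ≥ 2`, `α ≥ 1`), suppose `r = Σ_{i=0}^l f_i(x) y^i` with `l > 0`,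
`f_l ≠ 0`, and `d r = a x + b`.  Let `j₀` be the greatest positive integer
with `l - m(j₀ - 1) > 0`.  Then `l = m j₀`, and for all `1 ≤ j ≤ j₀`:
`deg_x f_{l-mj} = j(α+1)` and `deg_x f_{l-mj+s} ≤ (j-1)(α+1)` for
`1 ≤ s ≤ m-1`. -/
theorem stmt11 (k : Type*) [Field k] [CharZero k] (m α : ℕ) (hm : 2 ≤ m) (hα : 1 ≤ α)
    (d : Derivation k (Polynomial (Polynomial k)) (Polynomial (Polynomial k)))
    (hdx : d (C X) = X ^ m)
    (hdy : d X = 1 - (C X) ^ α * X)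
    (l : ℕ) (hl : 0 < l) (f : ℤ → Polynomial k)
    (hf0 : ∀ j : ℤ, ((l : ℤ) < j ∨ j < 0) → f j = 0)
    (hfl : f l ≠ 0)
    (r : Polynomial (Polynomial k))
    (hrsum : r = ∑ i ∈ Finset.range (l + 1), C (f i) * X ^ i)
    (a b : k) (hr : d r = C (Polynomial.C a) * C X + C (Polynomial.C b))
    (j₀ : ℕ) (hj₀pos : 0 < j₀) (hj₀ : m * (j₀ - 1) < l)
    (hj₀max : ∀ j : ℕ, 0 < j → m * (j - 1) < l → j ≤ j₀) :
    l = m * j₀ ∧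
    ∀ j : ℕ, 1 ≤ j → j ≤ j₀ →
      (f ((l : ℤ) - m * j)).degree = ((j * (α + 1) : ℕ) : WithBot ℕ) ∧
      ∀ s : ℕ, 1 ≤ s → s ≤ m - 1 →
        (f ((l : ℤ) - m * j + s)).degree ≤ (((j - 1) * (α + 1) : ℕ) : WithBot ℕ) :=
  stmt11_general k m α hm d hdx hdy l f hf0 hfl r hrsum a b hr j₀ hj₀pos hj₀ hj₀max
end

section
/- Let k be a field of characteristic zero, n ≥ 3, R_n = k[x_1,...,x_n], d_n = (1 - x_1 x_2^α)∂_{x_1} + x_1^m ∂_{x_2} + x_2 ∂_{x_3} + ... + x_{n-1} ∂_{x_n} with m ≥ 2, α ≥ 1. If ρ is a k-algebra automorphism of R_n commuting with d_n, then ρ(x_1) = x_1 and ρ(x_2) = x_2. -/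
/-!
The divergence `div D = ∑ᵢ ∂ᵢ (D xᵢ)` of a derivation of `k[x₁, …, xₙ]` is fixed by every
automorphism `ρ` commuting with `D`: the chain rule gives `J · ρ(H) = H · J + D(J)` for the
Jacobian matrices `J` of `ρ` and `H` of `D`, and `det J` is a nonzero constant. Here
`div dₙ = -x₂^α`, so `ρ(x₂)^α = x₂^α` and `ρ(x₂) = c x₂` with `c^α = 1`. Applying `ρ` to
`dₙ x₂ = x₁^m` gives `ρ(x₁)^m = c x₁^m`, so `ρ(x₁) = e x₁`, and comparing `ρ(dₙ x₁)` with
`dₙ(ρ x₁)` forces `e = 1`, hence `c = e^m = 1`.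
-/

open MvPolynomial

theorem Derivation.leibniz_prod {R A M : Type*} [CommSemiring R] [CommSemiring A] [Algebra R A]
    [AddCommMonoid M] [Module A M] [Module R M] (D : Derivation R A M) {ι : Type*}
    [DecidableEq ι] (s : Finset ι) (f : ι → A) :
    D (∏ i ∈ s, f i) = ∑ i ∈ s, (∏ j ∈ s.erase i, f j) • D (f i) := by
  induction s using Finset.induction_on with
  | empty => simp
  | insert a s ha ih =>
    have herase : ∀ i ∈ s, ∏ j ∈ (insert a s).erase i, f j = f a * ∏ j ∈ s.erase i, f j :=
      fun i hi => by
        rw [Finset.erase_insert_of_ne (ne_of_mem_of_not_mem hi ha).symm,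
          Finset.prod_insert fun h => ha (Finset.mem_of_mem_erase h)]
    rw [Finset.prod_insert ha, D.leibniz, ih, Finset.sum_insert ha, Finset.erase_insert ha,
      Finset.smul_sum, add_comm]
    congr 1
    exact Finset.sum_congr rfl fun i hi => by rw [herase i hi, mul_smul]

theorem Derivation.map_det {R A : Type*} [CommSemiring R] [CommRing A] [Algebra R A]
    (D : Derivation R A A) {n : Type*} [Fintype n] [DecidableEq n] (M : Matrix n n A) :
    D M.det = (M.adjugate * M.map D).trace := by
  have hcol : D M.det = ∑ j, (M.updateCol j fun i => D (M i j)).det := by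
    simp only [Matrix.det_apply, map_sum, Units.smul_def, map_zsmul, D.leibniz_prod,
      Finset.smul_sum]
    rw [Finset.sum_comm]
    refine Finset.sum_congr rfl fun j _ => Finset.sum_congr rfl fun τ _ => ?_
    rw [← Finset.mul_prod_erase _ _ (Finset.mem_univ j), Matrix.updateCol_self,
      Finset.prod_congr rfl fun i hi => Matrix.updateCol_ne (Finset.ne_of_mem_erase hi),
      smul_eq_mul, mul_comm]
  rw [hcol, Matrix.trace]
  refine Finset.sum_congr rfl fun j _ => ?_
  rw [← Matrix.cramer_apply, Matrix.cramer_eq_adjugate_mulVec]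
  rfl

namespace MvPolynomial

variable {σ τ : Type*}

section CommSemiring

variable {R : Type*} [CommSemiring R]

theorem pderiv_pderiv_comm (i j : σ) (f : MvPolynomial σ R) :
    pderiv i (pderiv j f) = pderiv j (pderiv i f) := by
  classical
  induction f using MvPolynomial.induction_on with
  | C a => simp
  | add p q hp hq => simp only [map_add, hp, hq]
  | mul_X p l hp =>
    simp only [pderiv_mul, map_add, pderiv_X, hp, Pi.single_apply]
    split_ifs <;> simp only [pderiv_one, map_zero, mul_zero, mul_one, add_zero, add_right_comm]

theorem derivation_eq_sum_pderiv_smul [Fintype σ] {A : Type*} [AddCommMonoid A] [Module R A]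
    [Module (MvPolynomial σ R) A] [IsScalarTower R (MvPolynomial σ R) A]
    (D : Derivation R (MvPolynomial σ R) A) (f : MvPolynomial σ R) :
    D f = ∑ i, pderiv i f • D (X i) := by
  classical
  let E : Derivation R (MvPolynomial σ R) A :=
    ∑ i, (LinearMap.toSpanSingleton (MvPolynomial σ R) A (D (X i))).compDer (pderiv i)
  have hE : ∀ g, E g = ∑ i, pderiv i g • D (X i) := fun g => by
    change Derivation.coeFnAddMonoidHom (∑ i, _) g = _
    rw [map_sum, Finset.sum_apply]
    rfl
  have hDE : D = E := derivation_ext fun j => by simp [hE, pderiv_X, Pi.single_apply]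
  exact (DFunLike.congr_fun hDE f).trans (hE f)

theorem pderiv_algHom_apply [Fintype σ] (φ : MvPolynomial σ R →ₐ[R] MvPolynomial τ R) (l : τ)
    (f : MvPolynomial σ R) :
    pderiv l (φ f) = ∑ i, pderiv l (φ (X i)) * φ (pderiv i f) := by
  classical
  induction f using MvPolynomial.induction_on with
  | C a => simp
  | add p q hp hq => simp only [map_add, hp, hq, mul_add, Finset.sum_add_distrib]
  | mul_X p j hp =>
    simp only [map_mul, pderiv_mul, map_add, pderiv_X, hp, mul_add, Finset.sum_add_distrib,
      Finset.sum_mul, Pi.single_apply]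
    simp [mul_comm, mul_assoc]

noncomputable def jacobian (φ : MvPolynomial σ R →ₐ[R] MvPolynomial τ R) :
    Matrix τ σ (MvPolynomial τ R) :=
  Matrix.of fun l i => pderiv l (φ (X i))

theorem jacobian_mul_map_jacobian_symm [Fintype σ] [DecidableEq τ]
    (ρ : MvPolynomial σ R ≃ₐ[R] MvPolynomial τ R) :
    jacobian ρ.toAlgHom * (jacobian ρ.symm.toAlgHom).map ρ = 1 := by
  refine Matrix.ext fun l j => ?_
  calc (jacobian ρ.toAlgHom * (jacobian ρ.symm.toAlgHom).map ρ) l j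
      = pderiv l (ρ (ρ.symm (X j))) := (pderiv_algHom_apply ρ.toAlgHom l (ρ.symm (X j))).symm
    _ = (1 : Matrix τ τ (MvPolynomial τ R)) l j := by
      simp [pderiv_X, Pi.single_apply, Matrix.one_apply, eq_comm]

noncomputable def divergence [Fintype σ] (D : Derivation R (MvPolynomial σ R) (MvPolynomial σ R)) :
    MvPolynomial σ R :=
  ∑ i, pderiv i (D (X i))

theorem pderiv_derivation_apply [Fintype σ]
    (D : Derivation R (MvPolynomial σ R) (MvPolynomial σ R)) (l : σ) (f : MvPolynomial σ R) :
    pderiv l (D f) = D (pderiv l f) + ∑ i, pderiv l (D (X i)) * pderiv i f := by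
  rw [derivation_eq_sum_pderiv_smul D f, derivation_eq_sum_pderiv_smul D (pderiv l f)]
  simp only [smul_eq_mul, map_sum, pderiv_mul, Finset.sum_add_distrib, pderiv_pderiv_comm l]
  exact congrArg _ (Finset.sum_congr rfl fun i _ => mul_comm _ _)

end CommSemiring

section CommRing

variable {R : Type*} [CommRing R] [Fintype σ] [DecidableEq σ]

theorem isUnit_det_jacobian (ρ : MvPolynomial σ R ≃ₐ[R] MvPolynomial σ R) :
    IsUnit (jacobian ρ.toAlgHom).det :=
  Matrix.isUnit_det_of_right_inverse (jacobian_mul_map_jacobian_symm ρ)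

theorem det_jacobian_mul_map_divergence (D : Derivation R (MvPolynomial σ R) (MvPolynomial σ R))
    (ρ : MvPolynomial σ R →ₐ[R] MvPolynomial σ R) (hρD : ∀ f, ρ (D f) = D (ρ f)) :
    (jacobian ρ).det * ρ (divergence D) =
      (jacobian ρ).det * divergence D + D (jacobian ρ).det := by
  set J := jacobian ρ
  let H : Matrix σ σ (MvPolynomial σ R) := Matrix.of fun l i => pderiv l (D (X i))
  have hconj : J * H.map ρ = H * J + J.map D := by
    refine Matrix.ext fun l j => ?_
    calc (J * H.map ρ) l j = pderiv l (ρ (D (X j))) := (pderiv_algHom_apply ρ l _).symm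
      _ = pderiv l (D (ρ (X j))) := by rw [hρD]
      _ = (H * J + J.map D) l j := by rw [pderiv_derivation_apply, add_comm]; rfl
  -- multiply by `adj J` and take traces; by Jacobi's formula `tr (adj J · D(J)) = D (det J)`
  have htrace := congrArg (fun M => (J.adjugate * M).trace) hconj
  simp only [Matrix.mul_add, Matrix.trace_add, ← Matrix.mul_assoc, Matrix.adjugate_mul] at htrace
  rw [Matrix.trace_mul_cycle, Matrix.mul_adjugate, ← D.map_det] at htrace
  have hdiv : divergence D = H.trace := rfl
  simpa [hdiv, Matrix.trace_smul, ← AddMonoidHom.map_trace] using htrace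

theorem map_divergence_of_commute [IsReduced R]
    (D : Derivation R (MvPolynomial σ R) (MvPolynomial σ R))
    (ρ : MvPolynomial σ R ≃ₐ[R] MvPolynomial σ R) (hρD : ∀ f, ρ (D f) = D (ρ f)) :
    ρ (divergence D) = divergence D := by
  obtain ⟨c, hc, hdet⟩ := isUnit_iff_eq_C_of_isReduced.mp (isUnit_det_jacobian ρ)
  have h := det_jacobian_mul_map_divergence D ρ.toAlgHom hρD
  rw [hdet, derivation_C, add_zero] at h
  exact (hc.map C).mul_left_cancel h

end CommRing

theorem exists_eq_C_mul_X_of_pow_eq {R : Type*} [CommRing R] [IsDomain R]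
    {p : MvPolynomial σ R} {i : σ} {r : ℕ} (hr : r ≠ 0) {a : R} (ha : IsUnit a)
    (h : p ^ r = C a * X i ^ r) :
    ∃ c, c ^ r = a ∧ p = C c * X i := by
  obtain ⟨q, rfl⟩ : X i ∣ p :=
    X_prime.dvd_of_dvd_pow (h ▸ dvd_mul_of_dvd_right (dvd_pow_self _ hr) _)
  have hq : q ^ r = C a :=
    mul_left_cancel₀ (pow_ne_zero r (X_ne_zero i)) (by rw [← mul_pow, h, mul_comm])
  obtain ⟨c, -, rfl⟩ :=
    isUnit_iff_eq_C_of_isReduced.mp ((isUnit_pow_iff hr).mp (hq ▸ ha.map C))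
  exact ⟨c, C_injective σ R (by rw [map_pow, hq]), mul_comm _ _⟩

end MvPolynomial

/-- `n ≥ 3`, `R_n = k[x_1,…,x_n]`, `d_n` as in the paper
(`m ≥ 2`, `α ≥ 1`).  Any `k`-algebra automorphism `ρ` of `R_n` commuting
with `d_n` fixes `x_1` and `x_2`. -/
theorem stmt12 (k : Type*) [Field k] (n m α : ℕ) (hn : 3 ≤ n)
    (hm : 2 ≤ m) (hα : 1 ≤ α)
    (d : Derivation k (MvPolynomial (Fin n) k) (MvPolynomial (Fin n) k))
    (hd1 : d (X (⟨0, by omega⟩ : Fin n)) =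
      1 - X (⟨0, by omega⟩ : Fin n) * (X (⟨1, by omega⟩ : Fin n)) ^ α)
    (hd2 : d (X (⟨1, by omega⟩ : Fin n)) = (X (⟨0, by omega⟩ : Fin n)) ^ m)
    (hdi : ∀ i : Fin n, 2 ≤ i.1 → d (X i) = X (⟨i.1 - 1, by omega⟩ : Fin n))
    (ρ : MvPolynomial (Fin n) k ≃ₐ[k] MvPolynomial (Fin n) k)
    (hcomm : ∀ r : MvPolynomial (Fin n) k, ρ (d r) = d (ρ r)) :
    ρ (X (⟨0, by omega⟩ : Fin n)) = X (⟨0, by omega⟩ : Fin n) ∧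
    ρ (X (⟨1, by omega⟩ : Fin n)) = X (⟨1, by omega⟩ : Fin n) := by
  set i₀ : Fin n := ⟨0, by omega⟩
  set i₁ : Fin n := ⟨1, by omega⟩
  have h₀₁ : i₀ ≠ i₁ := by simp [i₀, i₁, Fin.ext_iff]
  have hdiv : divergence d = -X i₁ ^ α := by
    rw [divergence, Finset.sum_eq_single i₀ _ (by simp)]
    · simp [hd1, pderiv_X_of_ne h₀₁.symm]
    intro j _ hj
    by_cases hj₁ : j = i₁
    · simp [hj₁, hd2, pderiv_X_of_ne h₀₁]
    · have hj₂ : 2 ≤ j.1 := by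
        simp only [i₀, i₁, ne_eq, Fin.ext_iff] at hj hj₁
        omega
      rw [hdi j hj₂, pderiv_X_of_ne (by simp [Fin.ext_iff]; omega)]
  obtain ⟨c, hcα, hρ₁⟩ : ∃ c, c ^ α = 1 ∧ ρ (X i₁) = C c * X i₁ :=
    exists_eq_C_mul_X_of_pow_eq (by omega) isUnit_one
      (by simpa [hdiv] using map_divergence_of_commute d ρ hcomm)
  obtain ⟨e, hem, hρ₀⟩ : ∃ e, e ^ m = c ∧ ρ (X i₀) = C e * X i₀ :=
    exists_eq_C_mul_X_of_pow_eq (by omega) (IsUnit.of_pow_eq_one hcα (by omega))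
      (by rw [← map_pow, ← hd2, hcomm, hρ₁, C_mul', d.map_smul, hd2, C_mul'])
  have he : e = 1 := by
    have h := hcomm (X i₀)
    rw [hd1, map_sub, map_one, map_mul, map_pow, hρ₀, hρ₁, C_mul' (a := e), d.map_smul, hd1,
      mul_pow, ← map_pow, hcα, map_one, one_mul] at h
    simp only [smul_eq_C_mul] at h
    exact C_injective (Fin n) k (by rw [C_1]; linear_combination -h)
  subst he
  simp [hρ₀, hρ₁, ← hem]
end

section
/- Let k be a field of characteristic zero, R = k[x,y], d(x) = y^m, d(y) = 1 - x^α y, m ≥ 2, α ≥ 1. Suppose r = Σ_{i=0}^{l} f_i(x) y^i with l > 0, f_l = 1, and d(r) = a x + b, and let j_0 be the greatest positive integer with l - m(j_0-1) > 0 (so l = m j_0). Then j_0 > 1, i.e., l > m. -/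
open Polynomial

/-- with `R = k[x,y]`, `d x = y^m`, `d y = 1 - x^α y`
(`m ≥ 2`, `α ≥ 1`), suppose `r = Σ_{i=0}^l f_i(x) y^i` with `l > 0`,
`f_l = 1`, and `d r = a x + b`; let `j₀` be the greatest positive integer
with `l - m(j₀ - 1) > 0`.  Then `j₀ > 1`, i.e. `l > m`. -/
theorem stmt15 (k : Type*) [Field k] [CharZero k] (m α : ℕ) (hm : 2 ≤ m) (hα : 1 ≤ α)
    (d : Derivation k (Polynomial (Polynomial k)) (Polynomial (Polynomial k)))
    (hdx : d (C X) = X ^ m)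
    (hdy : d X = 1 - (C X) ^ α * X)
    (l : ℕ) (hl : 0 < l) (f : ℤ → Polynomial k)
    (hf0 : ∀ j : ℤ, ((l : ℤ) < j ∨ j < 0) → f j = 0)
    (hfl : f l = 1)
    (r : Polynomial (Polynomial k))
    (hrsum : r = ∑ i ∈ Finset.range (l + 1), C (f i) * X ^ i)
    (a b : k) (hr : d r = C (Polynomial.C a) * C X + C (Polynomial.C b))
    (j₀ : ℕ) (hj₀pos : 0 < j₀) (hj₀ : m * (j₀ - 1) < l)
    (hj₀max : ∀ j : ℕ, 0 < j → m * (j - 1) < l → j ≤ j₀) :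
    1 < j₀ ∧ m < l := by
  -- d on constants (in y)
  have dC : ∀ p : Polynomial k, d (C p) = C (derivative p) * X ^ m := by
    intro p
    induction p using Polynomial.induction_on' with
    | add p q hp hq => simp [hp, hq, add_mul]
    | monomial n c =>
        rw [← C_mul_X_pow_eq_monomial, derivative_C_mul_X_pow]
        have hc : (C (C c) : Polynomial (Polynomial k)) = algebraMap k _ c := rfl
        rw [C_mul, C_pow, Derivation.leibniz, Derivation.leibniz_pow, hdx, hc,
          Derivation.map_algebraMap]
        cases n with
        | zero => simp
        | succ n =>
          simp only [nsmul_eq_mul, smul_eq_mul, Nat.add_sub_cancel, C_mul, C_pow,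
            map_natCast, pow_succ, pow_add]
          rw [← hc]
          ring
  have hterm : ∀ (i : ℕ) (p : Polynomial k), d (C p * X ^ i) =
      C (derivative p) * X ^ (m + i) + C ((i : Polynomial k) * p) * X ^ (i - 1)
        - C ((i : Polynomial k) * X ^ α * p) * X ^ i := by
    intro i p
    rw [Derivation.leibniz, Derivation.leibniz_pow, dC, hdy]
    cases i with
    | zero => simp
    | succ n =>
      simp only [nsmul_eq_mul, smul_eq_mul, Nat.add_sub_cancel, C_mul, C_pow, map_natCast,
        pow_succ, pow_add]
      ring
  have hdr : d r = ∑ i ∈ Finset.range (l + 1),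
      (C (derivative (f i)) * X ^ (m + i) + C ((i : Polynomial k) * f i) * X ^ (i - 1)
        - C ((i : Polynomial k) * X ^ α * f i) * X ^ i) := by
    rw [hrsum, map_sum]
    exact Finset.sum_congr rfl fun i _ => hterm i (f i)
  -- master coefficient identity
  have key : ∀ j : ℕ, j ≤ l →
      derivative (f ((j : ℤ) - m)) + ((j : Polynomial k) + 1) * f ((j : ℤ) + 1)
        - (j : Polynomial k) * X ^ α * f j
      = (if j = 0 then Polynomial.C a * X + Polynomial.C b else 0) := by
    intro j hj
    have h : (∑ i ∈ Finset.range (l + 1),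
        (C (derivative (f i)) * X ^ (m + i) + C ((i : Polynomial k) * f i) * X ^ (i - 1)
          - C ((i : Polynomial k) * X ^ α * f i) * X ^ i)).coeff j
        = (C (Polynomial.C a) * C X + C (Polynomial.C b)).coeff j := by
      rw [← hdr, hr]
    have hRHS : (C (Polynomial.C a) * C X + C (Polynomial.C b)).coeff j
        = if j = 0 then Polynomial.C a * X + Polynomial.C b else 0 := by
      rw [← C_mul, ← C_add, coeff_C]
    rw [hRHS, finset_sum_coeff] at h
    simp only [coeff_sub, coeff_add, coeff_C_mul, coeff_X_pow, mul_ite, mul_one, mul_zero] at h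
    rw [Finset.sum_sub_distrib, Finset.sum_add_distrib] at h
    -- S1
    have hS1 : (∑ i ∈ Finset.range (l + 1), if j = m + i then derivative (f i) else 0)
        = derivative (f ((j : ℤ) - m)) := by
      by_cases hmj : m ≤ j
      · rw [Finset.sum_congr rfl (fun i _ =>
          (if_congr (by omega : (j = m + i) ↔ (j - m = i)) rfl rfl)),
          Finset.sum_ite_eq (Finset.range (l + 1)) (j - m) (fun i => derivative (f i))]
        rw [if_pos (by simp only [Finset.mem_range]; omega)]
        congr 1
        congr 1
        omega
      · rw [Finset.sum_congr rfl (fun i _ => if_neg (by omega : ¬ (j = m + i)))]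
        rw [hf0 ((j : ℤ) - m) (Or.inr (by omega))]
        simp
    -- S2
    have hS2 : (∑ i ∈ Finset.range (l + 1), if j = i - 1 then (i : Polynomial k) * f i else 0)
        = ((j : Polynomial k) + 1) * f ((j : ℤ) + 1) := by
      have step : ∀ i ∈ Finset.range (l + 1),
          (if j = i - 1 then (i : Polynomial k) * f i else 0)
          = (if j + 1 = i then (i : Polynomial k) * f i else 0) := by
        intro i _
        rcases Nat.eq_zero_or_pos i with h0 | h0
        · subst h0; simp
        · exact if_congr (by omega) rfl rfl
      rw [Finset.sum_congr rfl step,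
        Finset.sum_ite_eq (Finset.range (l + 1)) (j + 1) (fun i => (i : Polynomial k) * f i)]
      by_cases hjl : j + 1 ≤ l
      · rw [if_pos (by simp only [Finset.mem_range]; omega)]
        push_cast
        ring_nf
      · rw [if_neg (by simp only [Finset.mem_range]; omega)]
        rw [hf0 ((j : ℤ) + 1) (Or.inl (by omega))]
        ring
    -- S3
    have hS3 : (∑ i ∈ Finset.range (l + 1), if j = i then (i : Polynomial k) * X ^ α * f i else 0)
        = (j : Polynomial k) * X ^ α * f j := by
      rw [Finset.sum_ite_eq (Finset.range (l + 1)) j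
        (fun i => (i : Polynomial k) * X ^ α * f i)]
      rw [if_pos (by simp only [Finset.mem_range]; omega)]
    rw [hS1, hS2, hS3] at h
    exact h
  -- main claim : m < l
  have hml : m < l := by
    by_contra hc
    push_neg at hc
    rcases lt_or_eq_of_le hc with hlt | heq
    · -- case l < m
      have h := key l le_rfl
      rw [hf0 ((l : ℤ) - m) (Or.inr (by omega)), hf0 ((l : ℤ) + 1) (Or.inl (by omega)),
        hfl, if_neg (by omega)] at h
      simp only [derivative_zero, mul_zero, mul_one, zero_add] at h
      have hx : ((l : Polynomial k) * X ^ α : Polynomial k) ≠ 0 := by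
        apply mul_ne_zero
        · simpa using (Nat.cast_ne_zero (R := k)).2 (by omega)
        · exact pow_ne_zero _ X_ne_zero
      rw [zero_sub, neg_eq_zero] at h
      exact hx h
    · -- case l = m
      subst heq
      have hf1 : f 1 = Polynomial.C a * X + Polynomial.C b := by
        have h := key 0 (by omega)
        rw [hf0 (((0 : ℕ) : ℤ) - (l : ℤ)) (Or.inr (by omega)), if_pos rfl] at h
        simpa using h
      have hrec : ∀ j : ℕ, 1 ≤ j → j < l →
          ((j : Polynomial k) + 1) * f ((j : ℤ) + 1) = (j : Polynomial k) * X ^ α * f j := by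
        intro j h1 h2
        have h := key j (le_of_lt h2)
        rw [hf0 ((j : ℤ) - l) (Or.inr (by omega)), if_neg (by omega)] at h
        simp only [derivative_zero, zero_add] at h
        linear_combination h
      have claim : ∀ j : ℕ, 1 ≤ j → j ≤ l →
          (j : Polynomial k) * f j = X ^ ((j - 1) * α) * f 1 := by
        intro j h1
        induction j, h1 using Nat.le_induction with
        | base => intro _; simp
        | succ n hn ih =>
          intro hle
          have h2 : n < l := by omega
          have hih := ih (le_of_lt h2)
          have hr2 := hrec n hn h2
          have hexp : (n + 1 - 1) * α = α + (n - 1) * α := by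
            cases n with
            | zero => omega
            | succ t => simp only [Nat.succ_sub_one]; ring
          rw [hexp, pow_add]
          push_cast
          linear_combination hr2 + X ^ α * hih
      have hfin := claim l (by omega) le_rfl
      rw [hfl, hf1, mul_one] at hfin
      have := congrArg (Polynomial.eval 0) hfin
      simp only [eval_mul, eval_pow, eval_X, eval_add, eval_C, eval_natCast] at this
      rw [zero_pow (by have : 1 ≤ (l - 1) * α := Nat.one_le_iff_ne_zero.mpr (by
        intro h; rcases Nat.mul_eq_zero.mp h with h|h <;> omega); omega), zero_mul] at this
      exact (by omega : l ≠ 0) (Nat.cast_eq_zero.mp this)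
  have h2 : 2 ≤ j₀ := hj₀max 2 (by omega) (by simpa using hml)
  exact ⟨by omega, hml⟩
end
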